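/- arXiv:1412.2691 — 9 statements merged into one kernel-verified Lean document; each statement's English description precedes it below -/
import Mathlib

section
/- Let V be a real vector space, let n ≥ 1, and let a₁, …, aₙ ∈ V with the convention aₙ₊₁ = a₁. Then the element ∑_{i=1}^{n} (aᵢ − p) ∧ (aᵢ₊₁ − p) of the second exterior power ⋀²(V) does not depend on the choice of p ∈ V; equivalently, for all p, q ∈ V, ∑_{i=1}^{n} (aᵢ − p) ∧ (aᵢ₊₁ − p) = ∑_{i=1}^{n} (aᵢ − q) ∧ (aᵢ₊₁ − q). (Grassmann-calculus form of Peano's Theorem 2.1: the bi-vector associated to a closed polygonal line is well defined.) -/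
open ExteriorAlgebra

/-! Expanding `(x - p) ∧ (y - p) = x ∧ y - (p ∧ y - p ∧ x)`, the dependence on `p` of the
closed-polygon sum is a telescoping sum of `p ∧ aᵢ`, which vanishes since `aₙ₊₁ = a₁`. -/

theorem ExteriorAlgebra.ι_sub_mul_ι_sub {R M : Type*} [CommRing R] [AddCommGroup M]
    [Module R M] (x y p : M) :
    ι R (x - p) * ι R (y - p) = ι R x * ι R y - (ι R p * ι R y - ι R p * ι R x) := by
  have hxp : ι R x * ι R p = -(ι R p * ι R x) := eq_neg_of_add_eq_zero_left (ι_add_mul_swap x p)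
  simp only [map_sub, sub_mul, mul_sub, ι_sq_zero, hxp]
  abel

theorem ExteriorAlgebra.sum_Icc_ι_sub_mul_ι_sub_of_closed {R M : Type*} [CommRing R]
    [AddCommGroup M] [Module R M] (n : ℕ) (a : ℕ → M) (ha : a (n + 1) = a 1) (p : M) :
    ∑ i ∈ Finset.Icc 1 n, ι R (a i - p) * ι R (a (i + 1) - p) =
      ∑ i ∈ Finset.Icc 1 n, ι R (a i) * ι R (a (i + 1)) := by
  have htelescope : ∑ i ∈ Finset.Icc 1 n, (ι R p * ι R (a (i + 1)) - ι R p * ι R (a i)) = 0 := by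
    rw [← Finset.Ico_add_one_right_eq_Icc,
      Finset.sum_Ico_sub (fun i ↦ ι R p * ι R (a i)) (Nat.le_add_left 1 n), ha, sub_self]
  simp only [ι_sub_mul_ι_sub, Finset.sum_sub_distrib, htelescope, sub_zero]

theorem peano_bivector_polygon_well_defined_general
    (V : Type*) [AddCommGroup V] [Module ℝ V]
    (n : ℕ) (a : ℕ → V) (ha : a (n + 1) = a 1) (p q : V) :
    ∑ i ∈ Finset.Icc 1 n, ι ℝ (a i - p) * ι ℝ (a (i + 1) - p) =
      ∑ i ∈ Finset.Icc 1 n, ι ℝ (a i - q) * ι ℝ (a (i + 1) - q) := by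
  rw [sum_Icc_ι_sub_mul_ι_sub_of_closed n a ha p, sum_Icc_ι_sub_mul_ι_sub_of_closed n a ha q]

/-- Grassmann-calculus form of Peano's Theorem 2.1: for a closed polygonal line
`a₁, …, aₙ, aₙ₊₁ = a₁` in a real vector space `V`, the bi-vector
`∑ᵢ (aᵢ − p) ∧ (aᵢ₊₁ − p) ∈ ⋀²(V)` does not depend on the choice of `p ∈ V`. -/
theorem peano_bivector_polygon_well_defined
    (V : Type*) [AddCommGroup V] [Module ℝ V]
    (n : ℕ) (hn : 1 ≤ n) (a : ℕ → V) (ha : a (n + 1) = a 1) (p q : V) :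
    ∑ i ∈ Finset.Icc 1 n, ι ℝ (a i - p) * ι ℝ (a (i + 1) - p) =
      ∑ i ∈ Finset.Icc 1 n, ι ℝ (a i - q) * ι ℝ (a (i + 1) - q) :=
  peano_bivector_polygon_well_defined_general V n a ha p q
end

section
/- Let n ≥ 1 and let A₁, …, Aₙ be points of ℝ³ with the convention Aₙ₊₁ = A₁ (a closed, not necessarily planar, polygonal line). Then there exist points X, Y, Z ∈ ℝ³ (a triangle) such that for every point P ∈ ℝ³, ∑_{i=1}^{n} (Aᵢ − P) ×ᵥ (Aᵢ₊₁ − P) = (Y − X) ×ᵥ (Z − X). Consequently, for every direction, the signed area of the parallel projection of the polygonal line on an arbitrary plane equals the signed area of the projection of the triangle X Y Z. (Peano's Theorem on the area of a non-planar polygon, Theorem 2.2: every closed polygonal line is equipollent to a triangle.) -/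
/-!
Since `(a - P) ⨯₃ (b - P) = a ⨯₃ b + (b - a) ⨯₃ P`, the part of the sum that depends on `P` is
`(∑ᵢ (Aᵢ₊₁ - Aᵢ)) ⨯₃ P`, which vanishes because the polygonal line is closed. The remaining
constant vector `v` is the bivector of a triangle `0 y z`: every vector is a cross product, namely
`v = y ⨯₃ (v ⨯₃ y) / (y ⬝ᵥ y)` for any nonzero `y` orthogonal to `v`.
-/

open Matrix

lemma exists_cross_eq {K : Type*} [Field K] [LinearOrder K] [IsStrictOrderedRing K]
    (v : Fin 3 → K) : ∃ y z : Fin 3 → K, y ⨯₃ z = v := by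
  obtain ⟨y, hy, hyv⟩ := exists_ne_zero_dotProduct_eq_zero v
  have hyy : y ⬝ᵥ y ≠ 0 := dotProduct_self_eq_zero.not.mpr hy
  refine ⟨y, (y ⬝ᵥ y)⁻¹ • v ⨯₃ y, ?_⟩
  rw [map_smul, cross_cross_eq_smul_sub_smul', dotProduct_comm v,
    hyv, zero_smul, sub_zero, smul_smul, inv_mul_cancel₀ hyy, one_smul]

lemma sub_cross_sub {R : Type*} [CommRing R] (a b p : Fin 3 → R) :
    (a - p) ⨯₃ (b - p) = a ⨯₃ b + (b - a) ⨯₃ p := by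
  simp only [map_sub, LinearMap.sub_apply, cross_self, sub_zero, ← cross_anticomm b p]
  abel

lemma sum_sub_cross_sub {ι R : Type*} [CommRing R] (s : Finset ι) (a b : ι → Fin 3 → R)
    (p : Fin 3 → R) :
    ∑ i ∈ s, (a i - p) ⨯₃ (b i - p) = ∑ i ∈ s, a i ⨯₃ b i + (∑ i ∈ s, (b i - a i)) ⨯₃ p := by
  simp only [sub_cross_sub, Finset.sum_add_distrib, map_sum, LinearMap.sum_apply]

theorem peano_nonplanar_polygon_equipollent_triangle_general
    (n : ℕ) (A : ℕ → Fin 3 → ℝ) (hA : A (n + 1) = A 1) :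
    ∃ X Y Z : Fin 3 → ℝ, ∀ P : Fin 3 → ℝ,
      ∑ i ∈ Finset.Icc 1 n, (A i - P) ⨯₃ (A (i + 1) - P) = (Y - X) ⨯₃ (Z - X) := by
  obtain ⟨Y, Z, hYZ⟩ := exists_cross_eq (∑ i ∈ Finset.Icc 1 n, A i ⨯₃ A (i + 1))
  have hclosed : ∑ i ∈ Finset.Icc 1 n, (A (i + 1) - A i) = 0 := by
    rw [← Finset.Ico_add_one_right_eq_Icc, Finset.sum_Ico_sub A (by omega), hA, sub_self]
  refine ⟨0, Y, Z, fun P => ?_⟩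
  rw [sum_sub_cross_sub, hclosed, map_zero, LinearMap.zero_apply, add_zero, sub_zero,
    sub_zero, hYZ]

/-- Peano's theorem on the area of a non-planar polygon (Theorem 2.2):
every closed (not necessarily planar) polygonal line `A₁, …, Aₙ, Aₙ₊₁ = A₁` in ℝ³
is equipollent to a triangle `X Y Z`: for every point `P`,
`∑ᵢ (Aᵢ − P) ×ᵥ (Aᵢ₊₁ − P) = (Y − X) ×ᵥ (Z − X)`. -/
theorem peano_nonplanar_polygon_equipollent_triangle
    (n : ℕ) (hn : 1 ≤ n) (A : ℕ → Fin 3 → ℝ) (hA : A (n + 1) = A 1) :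
    ∃ X Y Z : Fin 3 → ℝ, ∀ P : Fin 3 → ℝ,
      ∑ i ∈ Finset.Icc 1 n, (A i - P) ⨯₃ (A (i + 1) - P) = (Y - X) ⨯₃ (Z - X) :=
  peano_nonplanar_polygon_equipollent_triangle_general n A hA
end

section
/- Let V be a 3-dimensional real vector space. Then every element of the second exterior power ⋀²(V) is decomposable: for every w ∈ ⋀²(V) there exist u, v ∈ V such that w = u ∧ v. (This is the key lemma used by Peano to represent closed contours by bi-vectors, i.e., products of two vectors.) -/
/-!
Any four vectors in a space of dimension at most three satisfy a nontrivial relation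
`α u + β v + γ u' + δ v' = 0`. Hence the planes of `u ∧ v` and `u' ∧ v'` share the vector
`x = α u + β v`, so that `u ∧ v = x ∧ y` and `u' ∧ v' = x ∧ y'` and the sum is `x ∧ (y - y')`
(if one of the two coefficient pairs vanishes, the corresponding bivector is zero instead).
Decomposable bivectors are thus closed under addition, and they span `⋀²(V)`.
-/

open ExteriorAlgebra

namespace ExteriorAlgebra

variable {K V : Type*} [Field K] [AddCommGroup V] [Module K V]

def IsDecomposable (w : ExteriorAlgebra K V) : Prop :=
  ∃ u v : V, w = ι K u * ι K v

theorem exists_ι_mul_ι_eq_ι_smul_add_smul_mul {α β : K} (h : α ≠ 0 ∨ β ≠ 0) (u v : V) :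
    ∃ y : V, ι K u * ι K v = ι K (α • u + β • v) * ι K y := by
  rcases h with hα | hβ
  · refine ⟨α⁻¹ • v, ?_⟩
    simp only [map_add, map_smul, add_mul, smul_mul_assoc, mul_smul_comm, ι_sq_zero, smul_zero,
      add_zero, inv_smul_smul₀ hα]
  · have hswap : ι K v * ι K u = -(ι K u * ι K v) :=
      eq_neg_of_add_eq_zero_left (ι_add_mul_swap v u)
    refine ⟨-(β⁻¹ • u), ?_⟩
    simp only [map_add, map_smul, map_neg, add_mul, mul_neg, smul_mul_assoc, mul_smul_comm,
      ι_sq_zero, smul_zero, zero_add, hswap, smul_neg, neg_neg, inv_smul_smul₀ hβ]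

theorem ι_mul_ι_eq_zero_of_smul_add_smul_eq_zero {α β : K} (h : α ≠ 0 ∨ β ≠ 0) {u v : V}
    (hrel : α • u + β • v = 0) : ι K u * ι K v = 0 := by
  obtain ⟨y, hy⟩ := exists_ι_mul_ι_eq_ι_smul_add_smul_mul h u v
  rw [hy, hrel, map_zero, zero_mul]

theorem exists_nontrivial_relation_of_finrank_le_three [Module.Finite K V]
    (hV : Module.finrank K V ≤ 3) (u v u' v' : V) :
    ∃ α β γ δ : K, (α ≠ 0 ∨ β ≠ 0 ∨ γ ≠ 0 ∨ δ ≠ 0) ∧ α • u + β • v + γ • u' + δ • v' = 0 := by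
  have hdep : ¬LinearIndependent K ![u, v, u', v'] := fun h => by
    simpa using h.fintype_card_le_finrank.trans hV
  obtain ⟨g, hg, i, hi⟩ := Fintype.not_linearIndependent_iff.1 hdep
  refine ⟨g 0, g 1, g 2, g 3, ?_, by simpa [Fin.sum_univ_four, add_assoc] using hg⟩
  fin_cases i <;> simp_all

theorem IsDecomposable.zero : IsDecomposable (0 : ExteriorAlgebra K V) :=
  ⟨0, 0, by rw [map_zero, zero_mul]⟩

theorem IsDecomposable.smul (c : K) {w : ExteriorAlgebra K V} (hw : IsDecomposable w) :
    IsDecomposable (c • w) := by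
  obtain ⟨u, v, rfl⟩ := hw
  exact ⟨c • u, v, by rw [map_smul, smul_mul_assoc]⟩

theorem IsDecomposable.add [Module.Finite K V] (hV : Module.finrank K V ≤ 3)
    {w w' : ExteriorAlgebra K V} (hw : IsDecomposable w) (hw' : IsDecomposable w') :
    IsDecomposable (w + w') := by
  obtain ⟨u, v, rfl⟩ := hw
  obtain ⟨u', v', rfl⟩ := hw'
  obtain ⟨α, β, γ, δ, hne, hrel⟩ := exists_nontrivial_relation_of_finrank_le_three hV u v u' v'
  by_cases hαβ : α = 0 ∧ β = 0
  · have h' : ι K u' * ι K v' = 0 :=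
      ι_mul_ι_eq_zero_of_smul_add_smul_eq_zero (α := γ) (β := δ) (by tauto)
        (by simpa [hαβ] using hrel)
    exact ⟨u, v, by rw [h', add_zero]⟩
  by_cases hγδ : γ = 0 ∧ δ = 0
  · have h : ι K u * ι K v = 0 :=
      ι_mul_ι_eq_zero_of_smul_add_smul_eq_zero (α := α) (β := β) (by tauto)
        (by simpa [hγδ] using hrel)
    exact ⟨u', v', by rw [h, zero_add]⟩
  obtain ⟨y, hy⟩ := exists_ι_mul_ι_eq_ι_smul_add_smul_mul (not_and_or.1 hαβ) u v
  obtain ⟨y', hy'⟩ := exists_ι_mul_ι_eq_ι_smul_add_smul_mul (not_and_or.1 hγδ) u' v'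
  have hx : γ • u' + δ • v' = -(α • u + β • v) := by
    rw [eq_neg_iff_add_eq_zero, add_comm, ← add_assoc, hrel]
  refine ⟨α • u + β • v, y - y', ?_⟩
  rw [hy, hy', hx, map_neg, neg_mul, ← mul_neg, ← map_neg, ← mul_add, ← map_add, sub_eq_add_neg]

theorem isDecomposable_ιMulti_two (v : Fin 2 → V) : IsDecomposable (ιMulti K 2 v) :=
  ⟨v 0, v 1, by simp [ιMulti_apply, Matrix.vecTail]⟩

theorem isDecomposable_of_mem_exteriorPower_two [Module.Finite K V]
    (hV : Module.finrank K V ≤ 3) {w : ExteriorAlgebra K V} (hw : w ∈ ⋀[K]^2 V) :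
    IsDecomposable w := by
  rw [← ιMulti_span_fixedDegree] at hw
  induction hw using Submodule.span_induction with
  | mem _ hx => obtain ⟨v, rfl⟩ := hx; exact isDecomposable_ιMulti_two v
  | zero => exact IsDecomposable.zero
  | add _ _ _ _ hx hy => exact hx.add hV hy
  | smul c _ _ hx => exact hx.smul c

end ExteriorAlgebra

/-- In a 3-dimensional real vector space `V`, every element of the second exterior
power `⋀²(V)` is decomposable: it is the wedge product `u ∧ v` of two vectors. -/
theorem bivector_decomposable_of_finrank_three
    (V : Type*) [AddCommGroup V] [Module ℝ V] (hV : Module.finrank ℝ V = 3)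
    (w : ⋀[ℝ]^2 V) :
    ∃ u v : V, (w : ExteriorAlgebra ℝ V) = ι ℝ u * ι ℝ v :=
  have : Module.Finite ℝ V := Module.finite_of_finrank_eq_succ hV
  isDecomposable_of_mem_exteriorPower_two hV.le w.2
end

section
/- Let n ≥ 1 and let (Aᵢ, Bᵢ, Cᵢ), i = 1, …, n, be triples of points of ℝ³ (the triangular faces of a closed oriented polyhedral surface), satisfying the closedness condition ∑_{i=1}^{n} (Bᵢ − Aᵢ) ×ᵥ (Cᵢ − Aᵢ) = 0. Then the sum of the oriented volumes of the tetrahedra P Aᵢ Bᵢ Cᵢ, namely ∑_{i=1}^{n} det[Aᵢ − P, Bᵢ − P, Cᵢ − P], does not depend on the choice of the vertex P ∈ ℝ³: for all P, Q ∈ ℝ³, ∑_{i=1}^{n} det[Aᵢ − P, Bᵢ − P, Cᵢ − P] = ∑_{i=1}^{n} det[Aᵢ − Q, Bᵢ − Q, Cᵢ − Q]. (Peano's Theorem on the volume of an oriented polyhedron, Theorem 2.3.) -/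
open Matrix

/-- Determinant of the 3×3 matrix with columns `u`, `v`, `w`. -/
noncomputable def det3 (u v w : Fin 3 → ℝ) : ℝ := ((Matrix.of ![u, v, w])ᵀ).det

/-! Splitting `Bᵢ − P = (Bᵢ − Aᵢ) + (Aᵢ − P)` and likewise for `Cᵢ`, the triple product
`det[Aᵢ − P, Bᵢ − P, Cᵢ − P]` becomes `(Aᵢ − P) ⬝ (Bᵢ − Aᵢ) × (Cᵢ − Aᵢ)`. Summing, the part
depending on `P` is `P ⬝ ∑ᵢ (Bᵢ − Aᵢ) × (Cᵢ − Aᵢ)`, which closedness makes vanish. -/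

lemma det3_eq_dotProduct_cross (u v w : Fin 3 → ℝ) : det3 u v w = u ⬝ᵥ (v ⨯₃ w) := by
  rw [det3, det_transpose, triple_product_eq_det]
  rfl

lemma det3_sub_sub_sub (a b c p : Fin 3 → ℝ) :
    det3 (a - p) (b - p) (c - p) = (a - p) ⬝ᵥ ((b - a) ⨯₃ (c - a)) := by
  have hb : b - p = (b - a) + (a - p) := by abel
  have hc : c - p = (c - a) + (a - p) := by abel
  rw [det3_eq_dotProduct_cross, hb, hc]
  simp only [map_add, LinearMap.add_apply, cross_self, add_zero, dotProduct_add, dot_self_cross,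
    dot_cross_self]

lemma sum_det3_sub_sub_sub {ι : Type*} (s : Finset ι) (A B C : ι → Fin 3 → ℝ)
    (hclosed : ∑ i ∈ s, (B i - A i) ⨯₃ (C i - A i) = 0) (p : Fin 3 → ℝ) :
    ∑ i ∈ s, det3 (A i - p) (B i - p) (C i - p) =
      ∑ i ∈ s, A i ⬝ᵥ ((B i - A i) ⨯₃ (C i - A i)) := by
  simp only [det3_sub_sub_sub, sub_dotProduct, Finset.sum_sub_distrib, ← dotProduct_sum,
    hclosed, dotProduct_zero, sub_zero]

theorem peano_volume_oriented_polyhedron_general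
    (n : ℕ) (A B C : ℕ → Fin 3 → ℝ)
    (hclosed : ∑ i ∈ Finset.Icc 1 n, (B i - A i) ⨯₃ (C i - A i) = 0)
    (P Q : Fin 3 → ℝ) :
    ∑ i ∈ Finset.Icc 1 n, det3 (A i - P) (B i - P) (C i - P) =
      ∑ i ∈ Finset.Icc 1 n, det3 (A i - Q) (B i - Q) (C i - Q) := by
  rw [sum_det3_sub_sub_sub _ A B C hclosed P, sum_det3_sub_sub_sub _ A B C hclosed Q]

/-- Peano's theorem on the volume of an oriented polyhedron (Theorem 2.3):
for a closed oriented polyhedral surface with triangular faces `Aᵢ Bᵢ Cᵢ`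
(closedness: `∑ᵢ (Bᵢ − Aᵢ) ×ᵥ (Cᵢ − Aᵢ) = 0`), the sum of oriented volumes
`∑ᵢ det[Aᵢ − P, Bᵢ − P, Cᵢ − P]` does not depend on the vertex `P`. -/
theorem peano_volume_oriented_polyhedron
    (n : ℕ) (hn : 1 ≤ n) (A B C : ℕ → Fin 3 → ℝ)
    (hclosed : ∑ i ∈ Finset.Icc 1 n, (B i - A i) ⨯₃ (C i - A i) = 0)
    (P Q : Fin 3 → ℝ) :
    ∑ i ∈ Finset.Icc 1 n, det3 (A i - P) (B i - P) (C i - P) =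
      ∑ i ∈ Finset.Icc 1 n, det3 (A i - Q) (B i - Q) (C i - Q) :=
  peano_volume_oriented_polyhedron_general n A B C hclosed P Q
end

section
/- Let a < b and let γ : [a, b] → ℝ³ be a continuously differentiable closed curve (γ(a) = γ(b)), let O ∈ ℝ³, and set N := (1/2)∫ₐᵇ (γ(t) − O) ×ᵥ γ′(t) dt. Then for every pair of orthonormal vectors u, v ∈ ℝ³, the signed area of the orthogonal projection of γ on the plane spanned by u and v, namely (1/2)∫ₐᵇ (⟨γ(t) − O, u⟩⟨γ′(t), v⟩ − ⟨γ(t) − O, v⟩⟨γ′(t), u⟩) dt, equals ⟨N, u ×ᵥ v⟩. (Peano: projecting a closed curve on an arbitrary plane, the signed area bounded by the projection equals the corresponding projection of the bi-vector associated to the curve.) -/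
open Matrix
open scoped RealInnerProductSpace

/-- The cross product on Euclidean 3-space. -/
noncomputable def cross3 (u v : EuclideanSpace ℝ (Fin 3)) : EuclideanSpace ℝ (Fin 3) :=
  (WithLp.equiv 2 (Fin 3 → ℝ)).symm
    (crossProduct ((WithLp.equiv 2 (Fin 3 → ℝ)) u) ((WithLp.equiv 2 (Fin 3 → ℝ)) v))

/-!
By the Binet–Cauchy identity the integrand of the projected area is pointwise
`⟨(γ − O) ×ᵥ γ′, u ×ᵥ v⟩`, and taking the inner product with the fixed vector `u ×ᵥ v`
commutes with integration.
-/

theorem inner_cross3_cross3 (x y u v : EuclideanSpace ℝ (Fin 3)) :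
    ⟪cross3 x y, cross3 u v⟫ = ⟪x, u⟫ * ⟪y, v⟫ - ⟪x, v⟫ * ⟪y, u⟫ := by
  simp only [EuclideanSpace.inner_eq_star_dotProduct, cross3, star_trivial,
    WithLp.equiv_symm_apply, WithLp.equiv_apply]
  rw [cross_dot_cross]
  simp only [dotProduct_comm]
  ring

theorem continuous_cross3 :
    Continuous fun p : EuclideanSpace ℝ (Fin 3) × EuclideanSpace ℝ (Fin 3) => cross3 p.1 p.2 :=
  (PiLp.continuous_toLp 2 _).comp <|
    (crossProduct : (Fin 3 → ℝ) →ₗ[ℝ] _ →ₗ[ℝ] _).toContinuousBilinearMap.continuous₂.comp <|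
      ((PiLp.continuous_ofLp 2 _).comp continuous_fst).prodMk
        ((PiLp.continuous_ofLp 2 _).comp continuous_snd)

theorem ContinuousOn.cross3 {α : Type*} [TopologicalSpace α] {s : Set α}
    {f g : α → EuclideanSpace ℝ (Fin 3)} (hf : ContinuousOn f s) (hg : ContinuousOn g s) :
    ContinuousOn (fun t => _root_.cross3 (f t) (g t)) s :=
  continuous_cross3.comp_continuousOn' (f := fun t => (f t, g t)) (hf.prodMk hg)

theorem peano_projection_of_bivector_general
    (a b : ℝ) (hab : a < b) (γ γ' : ℝ → EuclideanSpace ℝ (Fin 3))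
    (hderiv : ∀ t ∈ Set.Icc a b, HasDerivWithinAt γ (γ' t) (Set.Icc a b) t)
    (hcont : ContinuousOn γ' (Set.Icc a b))
    (O : EuclideanSpace ℝ (Fin 3))
    (N : EuclideanSpace ℝ (Fin 3))
    (hN : N = (1 / 2 : ℝ) • ∫ t in a..b, cross3 (γ t - O) (γ' t))
    (u v : EuclideanSpace ℝ (Fin 3)) :
    (1 / 2 : ℝ) * ∫ t in a..b,
        (⟪γ t - O, u⟫ * ⟪γ' t, v⟫ - ⟪γ t - O, v⟫ * ⟪γ' t, u⟫) =
      ⟪N, cross3 u v⟫ := by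
  have hγ : ContinuousOn γ (Set.Icc a b) := fun t ht => (hderiv t ht).continuousWithinAt
  have hint : IntervalIntegrable (fun t => cross3 (γ t - O) (γ' t)) MeasureTheory.volume a b :=
    ((hγ.sub continuousOn_const).cross3 hcont).intervalIntegrable_of_Icc hab.le
  have hcomm := (innerSL ℝ (cross3 u v)).intervalIntegral_comp_comm hint
  simp only [innerSL_apply_apply, real_inner_comm _ (cross3 u v), inner_cross3_cross3] at hcomm
  rw [hN, real_inner_smul_left, ← hcomm]

/-- Peano: projecting a closed C¹ curve `γ` on the plane spanned by orthonormal
vectors `u`, `v`, the signed area bounded by the projection,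
`(1/2)∫ₐᵇ (⟨γ − O, u⟩⟨γ′, v⟩ − ⟨γ − O, v⟩⟨γ′, u⟩) dt`, equals the corresponding
projection `⟨N, u ×ᵥ v⟩` of the bi-vector `N = (1/2)∫ₐᵇ (γ − O) ×ᵥ γ′ dt`. -/
theorem peano_projection_of_bivector
    (a b : ℝ) (hab : a < b) (γ γ' : ℝ → EuclideanSpace ℝ (Fin 3))
    (hderiv : ∀ t ∈ Set.Icc a b, HasDerivWithinAt γ (γ' t) (Set.Icc a b) t)
    (hcont : ContinuousOn γ' (Set.Icc a b))
    (hclosed : γ a = γ b)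
    (O : EuclideanSpace ℝ (Fin 3))
    (N : EuclideanSpace ℝ (Fin 3))
    (hN : N = (1 / 2 : ℝ) • ∫ t in a..b, cross3 (γ t - O) (γ' t))
    (u v : EuclideanSpace ℝ (Fin 3))
    (hu : ‖u‖ = 1) (hv : ‖v‖ = 1) (huv : ⟪u, v⟫ = 0) :
    (1 / 2 : ℝ) * ∫ t in a..b,
        (⟪γ t - O, u⟫ * ⟪γ' t, v⟫ - ⟪γ t - O, v⟫ * ⟪γ' t, u⟫) =
      ⟪N, cross3 u v⟫ :=
  peano_projection_of_bivector_general a b hab γ γ' hderiv hcont O N hN u v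
end

section
/- Let t₀ < t₁ and let A, B : [t₀, t₁] → ℝ² be continuously differentiable, such that the closed segments [A(t), B(t)] and [A(t′), B(t′)] are disjoint whenever t ≠ t′, t, t′ ∈ [t₀, t₁]. Then the set ⋃_{t ∈ [t₀,t₁]} [A(t), B(t)] spanned by the moving segment has Lebesgue measure (area) u given by u = (1/2) ∫_{t₀}^{t₁} |det(B(t) − A(t), A′(t) + B′(t))| dt. (Peano's formula for planar area, Applicazioni geometriche, Theorem 47.) -/
/-!
Parametrize the swept region by `Φ(t, θ) = (1 - θ) A(t) + θ B(t)` on `[t₀, t₁] × [0, 1]`.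
Disjointness makes `Φ` injective away from the parameters with `A(t) = B(t)`, where its Jacobian
`det(B - A, (1 - θ) A' + θ B')` vanishes, so the change of variables formula gives the area as the
integral of the absolute Jacobian. The Jacobian is affine in `θ`, and disjointness also forces its
values `det(B - A, A')` and `det(B - A, B')` at `θ = 0, 1` to have the same sign: otherwise the
segment at a nearby time would cross `[A(t), B(t)]`. Hence the integral over `θ` is
`|det(B - A, A' + B')| / 2`.
-/

open MeasureTheory Set Filter Topology

def det2 (u v : ℝ × ℝ) : ℝ := u.1 * v.2 - u.2 * v.1

lemma det2_swap (u v : ℝ × ℝ) : det2 u v = -det2 v u := by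
  simp only [det2]; ring

lemma det2_add_right (w u v : ℝ × ℝ) : det2 w (u + v) = det2 w u + det2 w v := by
  simp only [det2, Prod.fst_add, Prod.snd_add]; ring

lemma det2_smul_right (w v : ℝ × ℝ) (c : ℝ) : det2 w (c • v) = c * det2 w v := by
  simp only [det2, Prod.smul_fst, Prod.smul_snd, smul_eq_mul]; ring

lemma det2_self (w : ℝ × ℝ) : det2 w w = 0 := by
  simp only [det2]; ring

lemma continuous_det2 : Continuous (Function.uncurry det2) := by
  unfold det2; fun_prop

lemma exists_eq_smul_of_det2_eq_zero {w v : ℝ × ℝ} (hw : w ≠ 0) (h : det2 w v = 0) :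
    ∃ c : ℝ, v = c • w := by
  unfold det2 at h
  rcases eq_or_ne w.1 0 with h1 | h1
  · have h2 : w.2 ≠ 0 := fun h2 => hw (Prod.ext h1 h2)
    refine ⟨v.2 / w.2, Prod.ext ?_ ?_⟩
    · rw [h1, zero_mul, zero_sub, neg_eq_zero] at h
      simp [(mul_eq_zero.1 h).resolve_left h2, h1]
    · simp [h2]
  · refine ⟨v.1 / w.1, Prod.ext ?_ ?_⟩
    · simp [h1]
    · simp only [Prod.smul_snd, smul_eq_mul]
      field_simp
      linarith

theorem HasDerivWithinAt.const_det2 {f : ℝ → ℝ × ℝ} {f' : ℝ × ℝ} {s : Set ℝ} {t : ℝ}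
    (w : ℝ × ℝ) (hf : HasDerivWithinAt f f' s t) :
    HasDerivWithinAt (fun u => det2 w (f u)) (det2 w f') s t := by
  let L : (ℝ × ℝ) →L[ℝ] ℝ :=
    w.1 • ContinuousLinearMap.snd ℝ ℝ ℝ - w.2 • ContinuousLinearMap.fst ℝ ℝ ℝ
  simpa [L, det2, Function.comp_def] using L.hasFDerivAt.comp_hasDerivWithinAt t hf

def ofColumns (c₁ c₂ : ℝ × ℝ) : (ℝ × ℝ) →L[ℝ] ℝ × ℝ :=
  (ContinuousLinearMap.fst ℝ ℝ ℝ).smulRight c₁ + (ContinuousLinearMap.snd ℝ ℝ ℝ).smulRight c₂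

lemma det_ofColumns (c₁ c₂ : ℝ × ℝ) : (ofColumns c₁ c₂).det = det2 c₁ c₂ := by
  rw [ContinuousLinearMap.det, ← LinearMap.det_toMatrix (Module.Basis.finTwoProd ℝ),
    Matrix.det_fin_two]
  simp [LinearMap.toMatrix_apply, ofColumns, det2]
  ring

lemma norm_lerp_sub_lerp_le {E : Type*} [SeminormedAddCommGroup E] [NormedSpace ℝ E]
    {a b a' b' : E} {θ : ℝ} (hθ : θ ∈ Icc (0 : ℝ) 1) :
    ‖((1 - θ) • a' + θ • b') - ((1 - θ) • a + θ • b)‖ ≤ ‖a' - a‖ + ‖b' - b‖ := by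
  have h1 : 0 ≤ 1 - θ := by linarith [hθ.2]
  calc ‖((1 - θ) • a' + θ • b') - ((1 - θ) • a + θ • b)‖
      = ‖(1 - θ) • (a' - a) + θ • (b' - b)‖ := by congr 1; module
    _ ≤ (1 - θ) * ‖a' - a‖ + θ * ‖b' - b‖ := by
      refine (norm_add_le _ _).trans_eq ?_
      rw [norm_smul, norm_smul, Real.norm_of_nonneg h1, Real.norm_of_nonneg hθ.1]
    _ ≤ ‖a' - a‖ + ‖b' - b‖ := by
      nlinarith [norm_nonneg (a' - a), norm_nonneg (b' - b), hθ.1, hθ.2]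

lemma mem_segment_of_det2_eq_zero_of_norm_lt {a b q : ℝ × ℝ} {θ δ : ℝ}
    (hθ : θ ∈ Icc δ (1 - δ)) (hdet : det2 (b - a) (q - a) = 0)
    (hq : ‖q - ((1 - θ) • a + θ • b)‖ < δ * ‖b - a‖) : q ∈ segment ℝ a b := by
  have hba : b - a ≠ 0 := by
    rintro h0
    rw [h0, norm_zero, mul_zero] at hq
    exact (norm_nonneg _).not_gt hq
  obtain ⟨c, hc⟩ := exists_eq_smul_of_det2_eq_zero hba hdet
  have hqc : q - ((1 - θ) • a + θ • b) = (c - θ) • (b - a) := by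
    linear_combination (norm := module) hc
  rw [hqc, norm_smul, Real.norm_eq_abs] at hq
  obtain ⟨hc₀, hc₁⟩ := abs_lt.1 (lt_of_mul_lt_mul_right hq (norm_nonneg _))
  refine ⟨1 - c, c, by linarith [hθ.2], by linarith [hθ.1], by ring, ?_⟩
  linear_combination (norm := module) -hc

lemma zero_mem_uIcc_of_mul_neg {x y : ℝ} (h : x * y < 0) : (0 : ℝ) ∈ uIcc x y := by
  rcases mul_neg_iff.1 h with ⟨hx, hy⟩ | ⟨hx, hy⟩
  · exact mem_uIcc_of_ge hy.le hx.le
  · exact mem_uIcc_of_le hx.le hy.le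

lemma not_disjoint_segment_of_det2_mul_neg {a b a' b' : ℝ × ℝ} {σ τ : ℝ}
    (hσ : 0 < σ) (hστ : σ ≤ τ) (hτ : τ < 1)
    (hsign : det2 (b - a) ((1 - σ) • a' + σ • b' - a) *
      det2 (b - a) ((1 - τ) • a' + τ • b' - a) < 0)
    (hclose : ‖a' - a‖ + ‖b' - b‖ < min σ (1 - τ) * ‖b - a‖) :
    ¬ Disjoint (segment ℝ a b) (segment ℝ a' b') := by
  have hcont : Continuous fun θ : ℝ => det2 (b - a) ((1 - θ) • a' + θ • b' - a) := by
    unfold det2; fun_prop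
  obtain ⟨θ, hθ, hθ0⟩ :=
    intermediate_value_uIcc hcont.continuousOn (zero_mem_uIcc_of_mul_neg hsign)
  rw [uIcc_of_le hστ] at hθ
  have hθ₀₁ : θ ∈ Icc (0 : ℝ) 1 := ⟨hσ.le.trans hθ.1, hθ.2.trans hτ.le⟩
  refine not_disjoint_iff.2 ⟨(1 - θ) • a' + θ • b', ?_, ?_⟩
  · refine mem_segment_of_det2_eq_zero_of_norm_lt ?_ hθ0
      ((norm_lerp_sub_lerp_le hθ₀₁).trans_lt hclose)
    exact ⟨(min_le_left _ _).trans hθ.1, by linarith [min_le_right σ (1 - τ), hθ.2]⟩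
  · exact ⟨1 - θ, θ, by linarith [hθ₀₁.2], hθ₀₁.1, by ring, rfl⟩

lemma exists_lerp_mul_lerp_neg {a b : ℝ} (h : a * b < 0) :
    ∃ σ τ : ℝ, 0 < σ ∧ σ ≤ τ ∧ τ < 1 ∧ ((1 - σ) * a + σ * b) * ((1 - τ) * a + τ * b) < 0 := by
  -- `r` is the zero of `θ ↦ (1 - θ) a + θ b`; halfway to either end the value is `a / 2`, `b / 2`.
  have hab : a - b ≠ 0 := by
    rcases mul_neg_iff.1 h with ⟨ha, hb⟩ | ⟨ha, hb⟩ <;> intro e <;> nlinarith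
  set r := a / (a - b)
  have hr : r * (a - b) = a := div_mul_cancel₀ a hab
  have hr₀ : 0 < r := by
    rcases mul_neg_iff.1 h with ⟨ha, hb⟩ | ⟨ha, hb⟩
    · exact div_pos ha (by linarith)
    · exact div_pos_of_neg_of_neg ha (by linarith)
  have hr₁ : r < 1 := by
    rcases mul_neg_iff.1 h with ⟨ha, hb⟩ | ⟨ha, hb⟩
    · rw [div_lt_one (by linarith)]; linarith
    · rw [div_lt_one_of_neg (by linarith)]; linarith
  refine ⟨r / 2, (1 + r) / 2, by positivity, by linarith, by linarith, ?_⟩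
  have hσ : (1 - r / 2) * a + r / 2 * b = a / 2 := by linear_combination -hr / 2
  have hτ : (1 - (1 + r) / 2) * a + (1 + r) / 2 * b = b / 2 := by linear_combination -hr / 2
  rw [hσ, hτ]
  linarith

lemma eventually_mul_neg_of_hasDerivWithinAt {f g : ℝ → ℝ} {f' g' : ℝ} {s : Set ℝ} {t : ℝ}
    (hf : HasDerivWithinAt f f' s t) (hg : HasDerivWithinAt g g' s t)
    (hf₀ : f t = 0) (hg₀ : g t = 0) (h : f' * g' < 0) :
    ∀ᶠ u in 𝓝[s \ {t}] t, f u * g u < 0 := by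
  have hslope := (hasDerivWithinAt_iff_tendsto_slope.1 hf).mul
    (hasDerivWithinAt_iff_tendsto_slope.1 hg)
  filter_upwards [hslope.eventually_lt_const h, self_mem_nhdsWithin] with u hu hus
  have hne : u - t ≠ 0 := sub_ne_zero.2 hus.2
  have hfg : f u * g u = slope f t u * slope g t u * (u - t) ^ 2 := by
    simp only [slope_def_field, hf₀, hg₀, sub_zero]
    field_simp
  rw [hfg]
  exact mul_neg_of_neg_of_pos hu (by positivity)

lemma nhdsWithin_Icc_diff_singleton_neBot {a b t : ℝ} (hab : a < b) (ht : t ∈ Icc a b) :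
    (𝓝[Icc a b \ {t}] t).NeBot := by
  rcases lt_or_eq_of_le ht.2 with htb | rfl
  · refine (nhdsGT_neBot t).mono (nhdsWithin_le_of_mem ?_)
    exact mem_of_superset (Ioo_mem_nhdsGT htb) fun u hu =>
      ⟨⟨ht.1.trans hu.1.le, hu.2.le⟩, hu.1.ne'⟩
  · refine (nhdsLT_neBot t).mono (nhdsWithin_le_of_mem ?_)
    exact mem_of_superset (Ioo_mem_nhdsLT hab) fun u hu => ⟨⟨hu.1.le, hu.2.le⟩, hu.2.ne⟩

theorem det2_mul_det2_nonneg_of_disjoint {s : Set ℝ} {A B : ℝ → ℝ × ℝ} {A' B' : ℝ × ℝ} {t : ℝ}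
    (hA : HasDerivWithinAt A A' s t) (hB : HasDerivWithinAt B B' s t)
    (hacc : (𝓝[s \ {t}] t).NeBot)
    (hdisj : ∀ u ∈ s, u ≠ t → Disjoint (segment ℝ (A t) (B t)) (segment ℝ (A u) (B u))) :
    0 ≤ det2 (B t - A t) A' * det2 (B t - A t) B' := by
  by_contra! hneg
  set w := B t - A t
  have hw : 0 < ‖w‖ := norm_pos_iff.2 fun h0 => by simp [h0, det2] at hneg
  obtain ⟨σ, τ, hσ, hστ, hτ, hsign⟩ := exists_lerp_mul_lerp_neg hneg
  have hside : ∀ᶠ u in 𝓝[s \ {t}] t,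
      det2 w ((1 - σ) • A u + σ • B u - A t) * det2 w ((1 - τ) • A u + τ • B u - A t) < 0 := by
    have hderiv (θ : ℝ) : HasDerivWithinAt (fun u => det2 w ((1 - θ) • A u + θ • B u - A t))
        (det2 w ((1 - θ) • A' + θ • B')) s t :=
      (((hA.const_smul (1 - θ)).add (hB.const_smul θ)).sub_const _).const_det2 w
    have hzero (θ : ℝ) : det2 w ((1 - θ) • A t + θ • B t - A t) = 0 := by
      rw [show (1 - θ) • A t + θ • B t - A t = θ • w by module, det2_smul_right, det2_self,
        mul_zero]
    refine eventually_mul_neg_of_hasDerivWithinAt (hderiv σ) (hderiv τ) (hzero σ) (hzero τ) ?_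
    simpa only [det2_add_right, det2_smul_right] using hsign
  have hclose : ∀ᶠ u in 𝓝[s \ {t}] t, ‖A u - A t‖ + ‖B u - B t‖ < min σ (1 - τ) * ‖w‖ := by
    have hlim : Tendsto (fun u => ‖A u - A t‖ + ‖B u - B t‖) (𝓝[s \ {t}] t) (𝓝 0) := by
      have hA₀ : Tendsto A (𝓝[s \ {t}] t) (𝓝 (A t)) :=
        (hA.continuousWithinAt.mono sdiff_subset).tendsto
      have hB₀ : Tendsto B (𝓝[s \ {t}] t) (𝓝 (B t)) :=
        (hB.continuousWithinAt.mono sdiff_subset).tendsto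
      simpa using ((hA₀.sub_const (A t)).norm.add (hB₀.sub_const (B t)).norm)
    exact hlim.eventually_lt_const (mul_pos (lt_min hσ (by linarith)) hw)
  obtain ⟨u, hu_side, hu_close, hu_mem, hu_ne⟩ :=
    (hside.and (hclose.and self_mem_nhdsWithin)).exists
  exact not_disjoint_segment_of_det2_mul_neg hσ hστ hτ hu_side hu_close (hdisj u hu_mem hu_ne)

theorem lintegral_abs_det_fderiv_eq_addHaar_image_of_injOn_sdiff {E : Type*}
    [NormedAddCommGroup E] [NormedSpace ℝ E] [FiniteDimensional ℝ E] [MeasurableSpace E]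
    [BorelSpace E] (μ : Measure E) [μ.IsAddHaarMeasure] {f : E → E} {f' : E → E →L[ℝ] E}
    {s N : Set E} (hs : MeasurableSet s) (hN : MeasurableSet N)
    (hf' : ∀ x ∈ s, HasFDerivWithinAt f (f' x) s x) (hdet : ∀ x ∈ s ∩ N, (f' x).det = 0)
    (hinj : InjOn f (s \ N)) :
    ∫⁻ x in s, ENNReal.ofReal |(f' x).det| ∂μ = μ (f '' s) := by
  have hnull : μ (f '' (s ∩ N)) = 0 :=
    addHaar_image_eq_zero_of_det_fderivWithin_eq_zero μ
      (fun x hx => (hf' x hx.1).mono inter_subset_left) hdet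
  have hzero : ∫⁻ x in s ∩ N, ENNReal.ofReal |(f' x).det| ∂μ = 0 :=
    (setLIntegral_congr_fun (hs.inter hN) fun x hx => by simp [hdet x hx]).trans lintegral_zero
  calc ∫⁻ x in s, ENNReal.ofReal |(f' x).det| ∂μ
      = ∫⁻ x in s \ N, ENNReal.ofReal |(f' x).det| ∂μ := by
        rw [← lintegral_inter_add_sdiff _ s hN, hzero, zero_add]
    _ = μ (f '' (s \ N)) :=
        lintegral_abs_det_fderiv_eq_addHaar_image μ (hs.diff hN)
          (fun x hx => (hf' x hx.1).mono sdiff_subset) hinj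
    _ = μ (f '' (s \ N) ∪ f '' (s ∩ N)) :=
        (measure_congr (union_ae_eq_left_of_ae_eq_empty (ae_eq_empty.2 hnull))).symm
    _ = μ (f '' s) := by rw [← image_union, sdiff_union_inter]

def segmentSweep (A B : ℝ → ℝ × ℝ) (p : ℝ × ℝ) : ℝ × ℝ := (1 - p.2) • A p.1 + p.2 • B p.1

def sweepJacobian (A B A' B' : ℝ → ℝ × ℝ) (p : ℝ × ℝ) : ℝ :=
  det2 (B p.1 - A p.1) ((1 - p.2) • A' p.1 + p.2 • B' p.1)

lemma segmentSweep_mem_segment (A B : ℝ → ℝ × ℝ) {t θ : ℝ} (hθ : θ ∈ Icc (0 : ℝ) 1) :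
    segmentSweep A B (t, θ) ∈ segment ℝ (A t) (B t) :=
  ⟨1 - θ, θ, by linarith [hθ.2], hθ.1, by ring, rfl⟩

lemma image_segmentSweep (A B : ℝ → ℝ × ℝ) (s : Set ℝ) :
    segmentSweep A B '' (s ×ˢ Icc 0 1) = ⋃ t ∈ s, segment ℝ (A t) (B t) := by
  ext z
  simp only [mem_image, mem_iUnion, mem_prod, segment_eq_image, exists_prop, Prod.exists]
  constructor
  · rintro ⟨t, θ, ⟨ht, hθ⟩, rfl⟩
    exact ⟨t, ht, θ, hθ, rfl⟩
  · rintro ⟨t, ht, θ, hθ, rfl⟩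
    exact ⟨t, θ, ⟨ht, hθ⟩, rfl⟩

lemma hasFDerivWithinAt_segmentSweep {A B : ℝ → ℝ × ℝ} {A' B' : ℝ × ℝ} {s I : Set ℝ}
    {p : ℝ × ℝ} (hA : HasDerivWithinAt A A' s p.1) (hB : HasDerivWithinAt B B' s p.1) :
    HasFDerivWithinAt (segmentSweep A B)
      (ofColumns ((1 - p.2) • A' + p.2 • B') (B p.1 - A p.1)) (s ×ˢ I) p := by
  have hfst : HasFDerivWithinAt Prod.fst (ContinuousLinearMap.fst ℝ ℝ ℝ) (s ×ˢ I) p :=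
    hasFDerivAt_fst.hasFDerivWithinAt
  have hsnd : HasFDerivWithinAt Prod.snd (ContinuousLinearMap.snd ℝ ℝ ℝ) (s ×ˢ I) p :=
    hasFDerivAt_snd.hasFDerivWithinAt
  have hmaps : MapsTo Prod.fst (s ×ˢ I) s := fun q hq => hq.1
  have hA₁ := hA.hasFDerivWithinAt.comp p hfst hmaps
  have hB₁ := hB.hasFDerivWithinAt.comp p hfst hmaps
  refine (((hsnd.const_sub 1).smul hA₁).add (hsnd.smul hB₁)).congr_fderiv ?_
  ext <;> simp [ofColumns] <;> ring

lemma injOn_segmentSweep {A B : ℝ → ℝ × ℝ} {s : Set ℝ}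
    (hdisj : ∀ t ∈ s, ∀ t' ∈ s, t ≠ t' →
      Disjoint (segment ℝ (A t) (B t)) (segment ℝ (A t') (B t'))) :
    InjOn (segmentSweep A B) ((s ×ˢ Icc 0 1) \ {p | A p.1 = B p.1}) := by
  rintro ⟨t, θ⟩ ⟨⟨ht, hθ⟩, hAB⟩ ⟨t', θ'⟩ ⟨⟨ht', hθ'⟩, -⟩ he
  obtain rfl : t = t' := by
    by_contra hne
    refine disjoint_left.1 (hdisj t ht t' ht' hne) (segmentSweep_mem_segment A B hθ) ?_
    exact he ▸ segmentSweep_mem_segment A B hθ'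
  have hθθ' : (θ - θ') • (B t - A t) = 0 := by
    simp only [segmentSweep] at he
    linear_combination (norm := module) he
  rcases smul_eq_zero.1 hθθ' with h | h
  · rw [sub_eq_zero.1 h]
  · exact absurd (sub_eq_zero.1 h).symm hAB

theorem volume_iUnion_segment_eq_lintegral {s : Set ℝ} (hs : IsClosed s)
    {A B A' B' : ℝ → ℝ × ℝ} (hA : ∀ t ∈ s, HasDerivWithinAt A (A' t) s t)
    (hB : ∀ t ∈ s, HasDerivWithinAt B (B' t) s t)
    (hdisj : ∀ t ∈ s, ∀ t' ∈ s, t ≠ t' →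
      Disjoint (segment ℝ (A t) (B t)) (segment ℝ (A t') (B t'))) :
    volume (⋃ t ∈ s, segment ℝ (A t) (B t)) =
      ∫⁻ p in s ×ˢ Icc (0 : ℝ) 1, ENNReal.ofReal |sweepJacobian A B A' B' p| := by
  set D := s ×ˢ Icc (0 : ℝ) 1
  have hD : IsClosed D := hs.prod isClosed_Icc
  have hends : ContinuousOn (fun p : ℝ × ℝ => (A p.1, B p.1)) D := by
    have hfst : MapsTo Prod.fst D s := fun p hp => hp.1
    exact ((HasDerivWithinAt.continuousOn hA).comp continuous_fst.continuousOn hfst).prodMk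
      ((HasDerivWithinAt.continuousOn hB).comp continuous_fst.continuousOn hfst)
  have hN : IsClosed (D ∩ (fun p : ℝ × ℝ => (A p.1, B p.1)) ⁻¹' diagonal (ℝ × ℝ)) :=
    hends.preimage_isClosed_of_isClosed hD isClosed_diagonal
  rw [← image_segmentSweep, ← lintegral_abs_det_fderiv_eq_addHaar_image_of_injOn_sdiff volume
    hD.measurableSet hN.measurableSet
    (fun p hp => hasFDerivWithinAt_segmentSweep (hA p.1 hp.1) (hB p.1 hp.1)) ?_ ?_]
  · refine setLIntegral_congr_fun hD.measurableSet fun p _ => ?_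
    rw [det_ofColumns, det2_swap, abs_neg, sweepJacobian]
  · rintro p ⟨-, -, hAB : A p.1 = B p.1⟩
    rw [det_ofColumns, hAB, sub_self]
    simp [det2]
  · rw [sdiff_self_inter]
    exact injOn_segmentSweep hdisj

lemma continuousOn_sweepJacobian {A B A' B' : ℝ → ℝ × ℝ} {s I : Set ℝ}
    (hA : ContinuousOn A s) (hB : ContinuousOn B s) (hA' : ContinuousOn A' s)
    (hB' : ContinuousOn B' s) : ContinuousOn (sweepJacobian A B A' B') (s ×ˢ I) := by
  have hc {F : ℝ → ℝ × ℝ} (hF : ContinuousOn F s) :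
      ContinuousOn (fun p : ℝ × ℝ => F p.1) (s ×ˢ I) :=
    hF.comp continuous_fst.continuousOn fun p hp => hp.1
  have hw : ContinuousOn (fun p : ℝ × ℝ => B p.1 - A p.1) (s ×ˢ I) := (hc hB).sub (hc hA)
  have hv : ContinuousOn (fun p : ℝ × ℝ => (1 - p.2) • A' p.1 + p.2 • B' p.1) (s ×ˢ I) :=
    ((continuousOn_const.sub continuousOn_snd).smul (hc hA')).add (continuousOn_snd.smul (hc hB'))
  exact continuous_det2.comp_continuousOn (hw.prodMk hv)

lemma integral_abs_lerp {a b : ℝ} (h : 0 ≤ a * b) :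
    ∫ θ in Icc (0 : ℝ) 1, |(1 - θ) * a + θ * b| = |a + b| / 2 := by
  have hsame := mul_nonneg_iff.1 h
  have habs : EqOn (fun θ => |(1 - θ) * a + θ * b|) (fun θ => (1 - θ) * |a| + θ * |b|)
      (Icc 0 1) := by
    intro θ hθ
    have h₁ : 0 ≤ 1 - θ := by linarith [hθ.2]
    dsimp only
    rw [abs_add_eq_add_abs_iff _ _ |>.2, abs_mul, abs_mul, abs_of_nonneg h₁, abs_of_nonneg hθ.1]
    rcases hsame with ⟨ha, hb⟩ | ⟨ha, hb⟩
    · exact Or.inl ⟨mul_nonneg h₁ ha, mul_nonneg hθ.1 hb⟩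
    · exact Or.inr ⟨mul_nonpos_of_nonneg_of_nonpos h₁ ha, mul_nonpos_of_nonneg_of_nonpos hθ.1 hb⟩
  rw [setIntegral_congr_fun measurableSet_Icc habs, integral_Icc_eq_integral_Ioc,
    ← intervalIntegral.integral_of_le zero_le_one, (abs_add_eq_add_abs_iff a b).2 hsame,
    intervalIntegral.integral_add
    ((by fun_prop : Continuous fun θ : ℝ => (1 - θ) * |a|).intervalIntegrable _ _)
    ((by fun_prop : Continuous fun θ : ℝ => θ * |b|).intervalIntegrable _ _)]
  simp [integral_id, intervalIntegral.integral_comp_sub_left (fun θ : ℝ => θ)]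
  ring

/-- Peano's formula for planar area (Applicazioni geometriche, Theorem 47):
if the closed segments `[A(t), B(t)]`, `t ∈ [t₀, t₁]`, are pairwise disjoint,
the region they span has area
`(1/2) ∫_{t₀}^{t₁} |det(B(t) − A(t), A′(t) + B′(t))| dt`. -/
theorem peano_planar_area_formula
    (t₀ t₁ : ℝ) (h : t₀ < t₁) (A B A' B' : ℝ → ℝ × ℝ)
    (hA : ∀ t ∈ Set.Icc t₀ t₁, HasDerivWithinAt A (A' t) (Set.Icc t₀ t₁) t)
    (hB : ∀ t ∈ Set.Icc t₀ t₁, HasDerivWithinAt B (B' t) (Set.Icc t₀ t₁) t)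
    (hA' : ContinuousOn A' (Set.Icc t₀ t₁))
    (hB' : ContinuousOn B' (Set.Icc t₀ t₁))
    (hdisj : ∀ t ∈ Set.Icc t₀ t₁, ∀ t' ∈ Set.Icc t₀ t₁, t ≠ t' →
      Disjoint (segment ℝ (A t) (B t)) (segment ℝ (A t') (B t'))) :
    (volume (⋃ t ∈ Set.Icc t₀ t₁, segment ℝ (A t) (B t))).toReal =
      (1 / 2) * ∫ t in t₀..t₁, |det2 (B t - A t) (A' t + B' t)| := by
  set D := Icc t₀ t₁ ×ˢ Icc (0 : ℝ) 1
  set J : ℝ × ℝ → ℝ := fun p => |sweepJacobian A B A' B' p|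
  have hJ : IntegrableOn J D :=
    (continuousOn_sweepJacobian (HasDerivWithinAt.continuousOn hA)
      (HasDerivWithinAt.continuousOn hB) hA' hB').abs.integrableOn_compact
      (isCompact_Icc.prod isCompact_Icc)
  have hinner : ∀ t ∈ Icc t₀ t₁,
      ∫ θ in Icc (0 : ℝ) 1, J (t, θ) = |det2 (B t - A t) (A' t + B' t)| / 2 := by
    intro t ht
    have hsign := det2_mul_det2_nonneg_of_disjoint (hA t ht) (hB t ht)
      (nhdsWithin_Icc_diff_singleton_neBot h ht) fun u hu hne => hdisj t ht u hu hne.symm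
    simpa only [J, sweepJacobian, det2_add_right, det2_smul_right] using integral_abs_lerp hsign
  calc (volume (⋃ t ∈ Icc t₀ t₁, segment ℝ (A t) (B t))).toReal
      = (∫⁻ p in D, ENNReal.ofReal (J p)).toReal := by
        rw [volume_iUnion_segment_eq_lintegral isClosed_Icc hA hB hdisj]
    _ = ∫ p in D, J p :=
        (integral_eq_lintegral_of_nonneg_ae (ae_of_all _ fun _ => abs_nonneg _)
          hJ.aestronglyMeasurable).symm
    _ = ∫ t in Icc t₀ t₁, ∫ θ in Icc (0 : ℝ) 1, J (t, θ) := by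
        rw [Measure.volume_eq_prod] at hJ ⊢
        exact setIntegral_prod J hJ
    _ = ∫ t in Icc t₀ t₁, |det2 (B t - A t) (A' t + B' t)| / 2 :=
        setIntegral_congr_fun measurableSet_Icc hinner
    _ = (1 / 2) * ∫ t in t₀..t₁, |det2 (B t - A t) (A' t + B' t)| := by
        rw [intervalIntegral.integral_of_le h.le, ← integral_Icc_eq_integral_Ioc, integral_div]
        ring
end

section
/- Let t₀ < t₁, let A : [t₀, t₁] → ℝ² and v : [t₀, t₁] → ℝ² be continuously differentiable, with v(t) tangent to the curve described by A at every parameter, i.e., det(v(t), A′(t)) = 0 for all t ∈ [t₀, t₁]. Assume the tangent segments [A(t), A(t) + v(t)] and [A(t′), A(t′) + v(t′)] are disjoint whenever t ≠ t′. Then the area of the tangent sweep ⋃_{t ∈ [t₀,t₁]} [A(t), A(t) + v(t)] equals (1/2) ∫_{t₀}^{t₁} |det(v(t), v′(t))| dt; in particular it depends only on the differences v(t) = B(t) − A(t) and not on the positions of the points A(t), B(t), so that the area of a tangent sweep of a curve equals the area of its corresponding tangent cluster. (Peano's case (3) of Theorem 47; Mamikon's theorem.) -/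
/-!
Parametrize the sweep by `Φ(t, s) = A t + s • v t` on `[t₀, t₁] × [0, 1]`. Its Jacobian is
`det(A' + s v', v) = -s det(v, v')`, the term `det(A', v)` vanishing by tangency. Disjointness of
the segments makes `Φ` injective once the parameters with `v t = 0` are removed, and there the
Jacobian vanishes anyway, so the area formula gives `area = ∫∫ s |det(v, v')| ds dt`, and the
integral over `s ∈ [0, 1]` contributes the factor `1/2`.
-/

open MeasureTheory Set

section AreaFormula

variable {E : Type*} [NormedAddCommGroup E] [NormedSpace ℝ E] [FiniteDimensional ℝ E]
  [MeasurableSpace E] [BorelSpace E] (μ : Measure E) [μ.IsAddHaarMeasure]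
  {f : E → E} {f' : E → E →L[ℝ] E} {s t : Set E}

theorem addHaar_image_eq_lintegral_abs_det_fderiv_of_injOn_of_det_eq_zero
    (hs : MeasurableSet s) (ht : MeasurableSet t) (hts : t ⊆ s)
    (hf' : ∀ x ∈ s, HasFDerivWithinAt f (f' x) s x) (hf : InjOn f t)
    (hdet : ∀ x ∈ s \ t, (f' x).det = 0) :
    μ (f '' s) = ∫⁻ x in s, ENNReal.ofReal |(f' x).det| ∂μ := by
  refine le_antisymm (addHaar_image_le_lintegral_abs_det_fderiv μ hs hf') ?_
  have hvanish : ∫⁻ x in s \ t, ENNReal.ofReal |(f' x).det| ∂μ = 0 := by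
    rw [setLIntegral_congr_fun (hs.diff ht) (g := fun _ => 0) fun x hx => by simp [hdet x hx]]
    exact lintegral_zero
  calc ∫⁻ x in s, ENNReal.ofReal |(f' x).det| ∂μ
      = ∫⁻ x in t, ENNReal.ofReal |(f' x).det| ∂μ := by
        rw [← union_sdiff_cancel hts, lintegral_union (hs.diff ht) disjoint_sdiff_right,
          hvanish, add_zero]
    _ = μ (f '' t) :=
        lintegral_abs_det_fderiv_eq_addHaar_image μ ht (fun x hx => (hf' x (hts hx)).mono hts) hf
    _ ≤ μ (f '' s) := measure_mono (image_mono hts)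

end AreaFormula

section Sweep

variable {E : Type*} [NormedAddCommGroup E] [NormedSpace ℝ E]

def sweepMap (A v : ℝ → E) (p : ℝ × ℝ) : E := A p.1 + p.2 • v p.1

def sweepDeriv (A' v v' : ℝ → E) (p : ℝ × ℝ) : ℝ × ℝ →L[ℝ] E :=
  (ContinuousLinearMap.fst ℝ ℝ ℝ).smulRight (A' p.1 + p.2 • v' p.1) +
    (ContinuousLinearMap.snd ℝ ℝ ℝ).smulRight (v p.1)

theorem image_sweepMap_prod_Icc (A v : ℝ → E) (I : Set ℝ) :
    sweepMap A v '' (I ×ˢ Icc 0 1) = ⋃ t ∈ I, segment ℝ (A t) (A t + v t) := by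
  ext x
  simp only [mem_image, mem_prod, mem_iUnion, segment_eq_image', add_sub_cancel_left,
    sweepMap, Prod.exists, exists_prop]
  constructor
  · rintro ⟨t, s, ⟨ht, hs⟩, rfl⟩
    exact ⟨t, ht, s, hs, rfl⟩
  · rintro ⟨t, ht, s, hs, rfl⟩
    exact ⟨t, s, ⟨ht, hs⟩, rfl⟩

theorem hasFDerivWithinAt_sweepMap {A v A' v' : ℝ → E} {I J : Set ℝ} {p : ℝ × ℝ}
    (hA : HasDerivWithinAt A (A' p.1) I p.1) (hv : HasDerivWithinAt v (v' p.1) I p.1) :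
    HasFDerivWithinAt (sweepMap A v) (sweepDeriv A' v v' p) (I ×ˢ J) p := by
  have hfst : HasFDerivWithinAt Prod.fst (ContinuousLinearMap.fst ℝ ℝ ℝ) (I ×ˢ J) p :=
    hasFDerivWithinAt_fst
  have hmaps : MapsTo Prod.fst (I ×ˢ J) I := fun q hq => hq.1
  have hAfst := hA.hasFDerivWithinAt.comp p hfst hmaps
  have hvfst := hv.hasFDerivWithinAt.comp p hfst hmaps
  refine (hAfst.add (hasFDerivWithinAt_snd.smul hvfst)).congr_fderiv ?_
  ext <;> simp [sweepDeriv, smul_add]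

theorem injOn_sweepMap {A v : ℝ → E} {I : Set ℝ}
    (hdisj : ∀ t ∈ I, ∀ t' ∈ I, t ≠ t' →
      Disjoint (segment ℝ (A t) (A t + v t)) (segment ℝ (A t') (A t' + v t'))) :
    InjOn (sweepMap A v) ((I \ v ⁻¹' {0}) ×ˢ Icc 0 1) := by
  rintro ⟨t, s⟩ ⟨⟨ht, hvt⟩, hs⟩ ⟨t', s'⟩ ⟨⟨ht', -⟩, hs'⟩ hΦ
  have hmem : ∀ {t s : ℝ}, s ∈ Icc (0 : ℝ) 1 →
      sweepMap A v (t, s) ∈ segment ℝ (A t) (A t + v t) := fun hs => by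
    rw [segment_eq_image']
    exact ⟨_, hs, by simp [sweepMap]⟩
  obtain rfl : t = t' := by
    by_contra hne
    exact disjoint_left.mp (hdisj t ht t' ht' hne) (hmem hs) (hΦ ▸ hmem hs')
  have hsv : s • v t = s' • v t := add_left_cancel hΦ
  rw [Prod.mk.injEq]
  exact ⟨rfl, smul_left_injective ℝ hvt hsv⟩

end Sweep

theorem det_fst_smulRight_add_snd_smulRight (a b : ℝ × ℝ) :
    ((ContinuousLinearMap.fst ℝ ℝ ℝ).smulRight a +
      (ContinuousLinearMap.snd ℝ ℝ ℝ).smulRight b).det = det2 a b := by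
  rw [ContinuousLinearMap.det, ← LinearMap.det_toMatrix (Module.Basis.finTwoProd ℝ),
    Matrix.det_fin_two]
  simp [LinearMap.toMatrix_apply, det2, mul_comm]

theorem det_sweepDeriv_of_tangent {A' v v' : ℝ → ℝ × ℝ} (p : ℝ × ℝ)
    (htan : det2 (v p.1) (A' p.1) = 0) :
    (sweepDeriv A' v v' p).det = -(p.2 * det2 (v p.1) (v' p.1)) := by
  rw [sweepDeriv, det_fst_smulRight_add_snd_smulRight]
  simp only [det2, Prod.fst_add, Prod.snd_add, Prod.smul_fst, Prod.smul_snd, smul_eq_mul] at htan ⊢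
  linear_combination -htan

theorem det_sweepDeriv_eq_zero {A' v v' : ℝ → ℝ × ℝ} {p : ℝ × ℝ} (hv : v p.1 = 0) :
    (sweepDeriv A' v v' p).det = 0 := by
  rw [sweepDeriv, det_fst_smulRight_add_snd_smulRight, hv]
  simp [det2]

theorem lintegral_ofReal_Icc_zero_one : ∫⁻ s in Icc (0 : ℝ) 1, ENNReal.ofReal s = 2⁻¹ := by
  have hint : IntegrableOn (fun s : ℝ => s) (Icc 0 1) := continuous_id'.integrableOn_Icc
  have hnonneg : 0 ≤ᵐ[volume.restrict (Icc (0 : ℝ) 1)] fun s => s :=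
    (ae_restrict_mem measurableSet_Icc).mono fun s hs => hs.1
  rw [← ofReal_integral_eq_lintegral_ofReal hint hnonneg, integral_Icc_eq_integral_Ioc,
    ← intervalIntegral.integral_of_le zero_le_one, integral_id]
  norm_num
  rw [one_div, ENNReal.ofReal_inv_of_pos two_pos, ENNReal.ofReal_ofNat]

theorem setLIntegral_prod_Icc_zero_one_mul_ofReal_snd {I : Set ℝ} {g : ℝ → ENNReal}
    (hg : AEMeasurable g (volume.restrict I)) :
    ∫⁻ p in I ×ˢ Icc (0 : ℝ) 1, g p.1 * ENNReal.ofReal p.2 = (∫⁻ t in I, g t) / 2 := by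
  rw [Measure.volume_eq_prod, ← Measure.prod_restrict,
    lintegral_prod_mul hg ENNReal.measurable_ofReal.aemeasurable, lintegral_ofReal_Icc_zero_one,
    ENNReal.div_eq_inv_mul, mul_comm]

theorem ContinuousOn.lintegral_Icc_ofReal_eq_intervalIntegral {f : ℝ → ℝ} {a b : ℝ}
    (hab : a ≤ b) (hf : ContinuousOn f (Icc a b)) (hf₀ : ∀ t ∈ Icc a b, 0 ≤ f t) :
    ∫⁻ t in Icc a b, ENNReal.ofReal (f t) = ENNReal.ofReal (∫ t in a..b, f t) := by
  rw [← ofReal_integral_eq_lintegral_ofReal (hf.integrableOn_compact isCompact_Icc)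
    ((ae_restrict_mem measurableSet_Icc).mono hf₀), integral_Icc_eq_integral_Ioc,
    intervalIntegral.integral_of_le hab]

theorem peano_mamikon_tangent_sweep_general
    (t₀ t₁ : ℝ) (h : t₀ < t₁) (A v A' v' : ℝ → ℝ × ℝ)
    (hA : ∀ t ∈ Set.Icc t₀ t₁, HasDerivWithinAt A (A' t) (Set.Icc t₀ t₁) t)
    (hv : ∀ t ∈ Set.Icc t₀ t₁, HasDerivWithinAt v (v' t) (Set.Icc t₀ t₁) t)
    (hv' : ContinuousOn v' (Set.Icc t₀ t₁))
    (htan : ∀ t ∈ Set.Icc t₀ t₁, det2 (v t) (A' t) = 0)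
    (hdisj : ∀ t ∈ Set.Icc t₀ t₁, ∀ t' ∈ Set.Icc t₀ t₁, t ≠ t' →
      Disjoint (segment ℝ (A t) (A t + v t)) (segment ℝ (A t') (A t' + v t'))) :
    (volume (⋃ t ∈ Set.Icc t₀ t₁, segment ℝ (A t) (A t + v t))).toReal =
      (1 / 2) * ∫ t in t₀..t₁, |det2 (v t) (v' t)| := by
  set I := Icc t₀ t₁
  have hvc : ContinuousOn v I := fun t ht => (hv t ht).continuousWithinAt
  have hdc : ContinuousOn (fun t => |det2 (v t) (v' t)|) I := by
    unfold det2
    fun_prop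
  have hR : MeasurableSet (I ×ˢ Icc (0 : ℝ) 1) := measurableSet_Icc.prod measurableSet_Icc
  have hS : MeasurableSet ((I \ v ⁻¹' {0}) ×ˢ Icc (0 : ℝ) 1) := by
    rw [← sdiff_self_inter]
    exact (measurableSet_Icc.diff (hvc.preimage_isClosed_of_isClosed isClosed_Icc
      isClosed_singleton).measurableSet).prod measurableSet_Icc
  have hjac : ∀ p ∈ I ×ˢ Icc (0 : ℝ) 1, ENNReal.ofReal |(sweepDeriv A' v v' p).det| =
      ENNReal.ofReal |det2 (v p.1) (v' p.1)| * ENNReal.ofReal p.2 := by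
    rintro p ⟨ht, hs⟩
    rw [det_sweepDeriv_of_tangent p (htan _ ht), abs_neg, abs_mul, abs_of_nonneg hs.1, mul_comm,
      ENNReal.ofReal_mul (abs_nonneg _)]
  have harea := addHaar_image_eq_lintegral_abs_det_fderiv_of_injOn_of_det_eq_zero volume hR hS
    (prod_mono sdiff_subset subset_rfl)
    (fun p hp => hasFDerivWithinAt_sweepMap (hA _ hp.1) (hv _ hp.1)) (injOn_sweepMap hdisj)
    (fun p hp => det_sweepDeriv_eq_zero <| by_contra fun hv0 => hp.2 ⟨⟨hp.1.1, hv0⟩, hp.1.2⟩)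
  rw [← image_sweepMap_prod_Icc, harea, setLIntegral_congr_fun hR hjac,
    setLIntegral_prod_Icc_zero_one_mul_ofReal_snd
      (hdc.aemeasurable measurableSet_Icc).ennreal_ofReal,
    hdc.lintegral_Icc_ofReal_eq_intervalIntegral h.le fun t _ => abs_nonneg _,
    ENNReal.toReal_div, ENNReal.toReal_ofReal
      (intervalIntegral.integral_nonneg h.le fun t _ => abs_nonneg _), ENNReal.toReal_ofNat]
  ring

/-- Peano's case (3) of Theorem 47 (Mamikon's theorem): if `v(t)` is tangent to
the curve `A` (`det(v(t), A′(t)) = 0`) and the tangent segments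
`[A(t), A(t) + v(t)]` are pairwise disjoint, then the area of the tangent sweep
equals `(1/2) ∫ |det(v(t), v′(t))| dt`; in particular it depends only on the
vectors `v(t)` and not on the positions of the points `A(t)`, so the area of a
tangent sweep equals the area of its tangent cluster. -/
theorem peano_mamikon_tangent_sweep
    (t₀ t₁ : ℝ) (h : t₀ < t₁) (A v A' v' : ℝ → ℝ × ℝ)
    (hA : ∀ t ∈ Set.Icc t₀ t₁, HasDerivWithinAt A (A' t) (Set.Icc t₀ t₁) t)
    (hv : ∀ t ∈ Set.Icc t₀ t₁, HasDerivWithinAt v (v' t) (Set.Icc t₀ t₁) t)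
    (hA' : ContinuousOn A' (Set.Icc t₀ t₁))
    (hv' : ContinuousOn v' (Set.Icc t₀ t₁))
    (htan : ∀ t ∈ Set.Icc t₀ t₁, det2 (v t) (A' t) = 0)
    (hdisj : ∀ t ∈ Set.Icc t₀ t₁, ∀ t' ∈ Set.Icc t₀ t₁, t ≠ t' →
      Disjoint (segment ℝ (A t) (A t + v t)) (segment ℝ (A t') (A t' + v t'))) :
    (volume (⋃ t ∈ Set.Icc t₀ t₁, segment ℝ (A t) (A t + v t))).toReal =
      (1 / 2) * ∫ t in t₀..t₁, |det2 (v t) (v' t)| :=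
  peano_mamikon_tangent_sweep_general t₀ t₁ h A v A' v' hA hv hv' htan hdisj
end

section
/- Let U ⊆ ℝ² be open, let σ : U → ℝ³ be continuously differentiable, and let (x, y) ∈ U. For ε > 0 small enough that [x, x+ε] × [y, y+ε] ⊆ U, define the bi-vector of the image of the counterclockwise oriented boundary ∂⁺Q_ε of the square Q_ε = [x, x+ε] × [y, y+ε] by b(ε) := (1/2)[∫₀^ε σ(x+s, y) ×ᵥ ∂₁σ(x+s, y) ds + ∫₀^ε σ(x+ε, y+s) ×ᵥ ∂₂σ(x+ε, y+s) ds − ∫₀^ε σ(x+s, y+ε) ×ᵥ ∂₁σ(x+s, y+ε) ds − ∫₀^ε σ(x, y+s) ×ᵥ ∂₂σ(x, y+s) ds]. Then ‖b(ε)‖ / ε² → ‖∂₁σ(x, y) ×ᵥ ∂₂σ(x, y)‖ as ε → 0⁺. (The quantitative content of Peano's theorem that the ratio between the magnitude of the bi-vector of an infinitesimal piece of surface and the area of that piece tends to 1, the area of σ(Q_ε) being asymptotic to ε²‖∂₁σ ×ᵥ ∂₂σ‖.) -/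
open Matrix Filter

/-!
Let `D = dσ(p)` and `B` a continuous bilinear map (here the cross product). Replacing `σ` by
`σ - σ(p)` in the first factor of `B(σ, dσ)` changes the integral over each side of the
parallelogram spanned by `ε d₁, ε d₂` at `p` by `B(σ(p), σ(end) - σ(start))`, and these terms
telescope around the closed boundary. On a side, `σ(q) - σ(p) = D(q - p) + o(ε)` and
`∂_d σ(q) = D d + o(1)`, so the integrand is the bilinear model `B(D(q - p), D d)` up to `o(ε)`,
hence the side integral is the model's up to `o(ε²)`. The model integrals are explicit and add up
to `ε² (B(D d₁, D d₂) - B(D d₂, D d₁))`, which for the antisymmetric cross product is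
`2 ε² ∂₁σ × ∂₂σ`.
-/

open Asymptotics Topology

section

variable {E F G : Type*} [NormedAddCommGroup E] [NormedSpace ℝ E] [NormedAddCommGroup F]
  [NormedSpace ℝ F] [NormedAddCommGroup G] [NormedSpace ℝ G]

theorem eventually_forall_uIcc_segment {P : E → Prop} {p : E} (h : ∀ᶠ q in 𝓝 p, P q) (a d : E) :
    ∀ᶠ ε in 𝓝 (0 : ℝ), ∀ s ∈ Set.uIcc 0 ε, P (p + ε • a + s • d) := by
  have hφ : Tendsto (fun z : ℝ × ℝ => p + z.1 • a + z.2 • d) (𝓝 0) (𝓝 p) := by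
    simpa using ((by fun_prop : Continuous fun z : ℝ × ℝ => p + z.1 • a + z.2 • d).tendsto 0)
  obtain ⟨r, hr, hP⟩ := Metric.eventually_nhds_iff.1 (hφ.eventually h)
  filter_upwards [Metric.ball_mem_nhds 0 hr] with ε hε s hs
  have hε' : |ε| < r := by simpa using hε
  have hs' : |s| ≤ |ε| := by simpa using Set.abs_sub_left_of_mem_uIcc hs
  refine hP (y := (ε, s)) ?_
  rw [Prod.dist_eq]
  simpa using And.intro hε' (hs'.trans_lt hε')

theorem norm_smul_add_smul_le_of_mem_uIcc {ε s : ℝ} (hs : s ∈ Set.uIcc 0 ε) (a d : E) :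
    ‖ε • a + s • d‖ ≤ |ε| * (‖a‖ + ‖d‖) := by
  have : |s| ≤ |ε| := by simpa using Set.abs_sub_left_of_mem_uIcc hs
  calc ‖ε • a + s • d‖ ≤ |ε| * ‖a‖ + |s| * ‖d‖ := by
        simpa [norm_smul] using norm_add_le (ε • a) (s • d)
    _ ≤ |ε| * (‖a‖ + ‖d‖) := by nlinarith [norm_nonneg d]

theorem continuousOn_comp_segment_of_contDiffAt {σ : E → F} {p a d : E} {ε : ℝ}
    (hC : ∀ s ∈ Set.uIcc 0 ε, ContDiffAt ℝ 1 σ (p + ε • a + s • d)) :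
    ContinuousOn (fun s => σ (p + ε • a + s • d)) (Set.uIcc 0 ε) ∧
      ContinuousOn (fun s => fderiv ℝ σ (p + ε • a + s • d)) (Set.uIcc 0 ε) := by
  set γ := fun s : ℝ => p + ε • a + s • d
  have hγ : Continuous γ := by fun_prop
  exact ⟨fun s hs => (hC s hs).continuousAt.comp_continuousWithinAt (f := γ)
      hγ.continuousWithinAt,
    fun s hs => ((hC s hs).continuousAt_fderiv one_ne_zero).comp_continuousWithinAt (f := γ)
      hγ.continuousWithinAt⟩

theorem intervalIntegrable_bilinear_comp_segment {σ : E → F} {p a d : E} {ε : ℝ}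
    (hC : ∀ s ∈ Set.uIcc 0 ε, ContDiffAt ℝ 1 σ (p + ε • a + s • d)) (B : F →L[ℝ] F →L[ℝ] G)
    (c : F) :
    IntervalIntegrable (fun s => B (σ (p + ε • a + s • d) - c) (fderiv ℝ σ (p + ε • a + s • d) d))
      MeasureTheory.volume 0 ε :=
  have ⟨hσ, hσ'⟩ := continuousOn_comp_segment_of_contDiffAt hC
  ((B.continuous.comp_continuousOn (hσ.sub continuousOn_const)).clm_apply
    (hσ'.clm_apply continuousOn_const)).intervalIntegrable

theorem integral_fderiv_comp_segment {σ : E → F} {p a d : E} {ε : ℝ} [CompleteSpace G]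
    (hC : ∀ s ∈ Set.uIcc 0 ε, ContDiffAt ℝ 1 σ (p + ε • a + s • d)) (L : F →L[ℝ] G) :
    ∫ s in (0 : ℝ)..ε, L (fderiv ℝ σ (p + ε • a + s • d) d) =
      L (σ (p + ε • a + ε • d)) - L (σ (p + ε • a)) := by
  have hderiv : ∀ s ∈ Set.uIcc 0 ε, HasDerivAt (fun s => L (σ (p + ε • a + s • d)))
      (L (fderiv ℝ σ (p + ε • a + s • d) d)) s := fun s hs => by
    have hγ : HasDerivAt (fun s : ℝ => p + ε • a + s • d) d s := by
      simpa using ((hasDerivAt_id s).smul_const d).const_add (p + ε • a)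
    exact L.hasFDerivAt.comp_hasDerivAt s
      (((hC s hs).differentiableAt one_ne_zero).hasFDerivAt.comp_hasDerivAt s hγ)
  have hcont : ContinuousOn (fun s => L (fderiv ℝ σ (p + ε • a + s • d) d)) (Set.uIcc 0 ε) :=
    L.continuous.comp_continuousOn
      ((continuousOn_comp_segment_of_contDiffAt hC).2.clm_apply continuousOn_const)
  simpa using intervalIntegral.integral_eq_sub_of_hasDerivAt hderiv hcont.intervalIntegrable

theorem isLittleO_bilinear_remainder {σ : E → F} {p : E} (hσ : ContDiffAt ℝ 1 σ p)
    (B : F →L[ℝ] F →L[ℝ] G) (d : E) :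
    (fun q => B (σ q - σ p) (fderiv ℝ σ q d) - B (fderiv ℝ σ p (q - p)) (fderiv ℝ σ p d))
      =o[𝓝 p] fun q => q - p := by
  set D := fderiv ℝ σ p
  have hσ' : (fun q => σ q - σ p - D (q - p)) =o[𝓝 p] fun q => q - p :=
    (hσ.differentiableAt one_ne_zero).hasFDerivAt.isLittleO
  have hD : Tendsto (fun q => fderiv ℝ σ q d) (𝓝 p) (𝓝 (D d)) :=
    ((hσ.continuousAt_fderiv one_ne_zero).clm_apply continuousAt_const).tendsto
  have hB := B.isBoundedBilinearMap
  have h₁ : (fun q => B (σ q - σ p - D (q - p)) (fderiv ℝ σ q d)) =o[𝓝 p] fun q => q - p :=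
    hB.isBigO_comp.trans_isLittleO <| isLittleO_norm_right.1 <| by
      simpa only [mul_one] using hσ'.norm_norm.mul_isBigO (hD.isBigO_one ℝ).norm_left
  have h₂ : (fun q => B (D (q - p)) (fderiv ℝ σ q d - D d)) =o[𝓝 p] fun q => q - p :=
    hB.isBigO_comp.trans_isLittleO <| isLittleO_norm_right.1 <| by
      simpa only [mul_one] using (D.isBigO_sub (𝓝 p) p).norm_norm.mul_isLittleO
        ((isLittleO_one_iff ℝ).2 (tendsto_sub_nhds_zero_iff.2 hD)).norm_left
  refine (h₁.add h₂).congr_left fun q => ?_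
  simp only [map_sub, _root_.sub_apply]
  abel

theorem integral_bilinear_comp_segment (B : F →L[ℝ] F →L[ℝ] G) [CompleteSpace G] (D : E →L[ℝ] F)
    (a d : E) (ε : ℝ) :
    ∫ s in (0 : ℝ)..ε, B (D (ε • a + s • d)) (D d) =
      ε ^ 2 • (B (D a) (D d) + (1 / 2 : ℝ) • B (D d) (D d)) := by
  simp only [map_add, map_smul, _root_.add_apply, _root_.smul_apply]
  rw [intervalIntegral.integral_add intervalIntegrable_const
      ((continuous_id.smul continuous_const).intervalIntegrable
        (u := fun s : ℝ => s • B (D d) (D d)) _ _),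
    intervalIntegral.integral_const, intervalIntegral.integral_smul_const, integral_id]
  module

/-- `∫ B(σ, ∂_d σ)` along the side of the parallelogram with corners `p`, `p + ε • d₁`,
`p + ε • (d₁ + d₂)`, `p + ε • d₂` that starts at `p + ε • a` and runs along `d`. -/
noncomputable def sideIntegral (B : F →L[ℝ] F →L[ℝ] G) (σ : E → F) (p a d : E) (ε : ℝ) : G :=
  ∫ s in (0 : ℝ)..ε, B (σ (p + ε • a + s • d)) (fderiv ℝ σ (p + ε • a + s • d) d)

noncomputable def boundaryBivector (B : F →L[ℝ] F →L[ℝ] G) (σ : E → F) (p d₁ d₂ : E) (ε : ℝ) :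
    G :=
  (1 / 2 : ℝ) • (sideIntegral B σ p 0 d₁ ε + sideIntegral B σ p d₁ d₂ ε -
    sideIntegral B σ p d₂ d₁ ε - sideIntegral B σ p 0 d₂ ε)

theorem sideIntegral_eq_integral_sub_add {B : F →L[ℝ] F →L[ℝ] G} {σ : E → F} {p a d : E} {ε : ℝ}
    [CompleteSpace G] (hC : ∀ s ∈ Set.uIcc 0 ε, ContDiffAt ℝ 1 σ (p + ε • a + s • d)) (c : F) :
    sideIntegral B σ p a d ε =
      (∫ s in (0 : ℝ)..ε, B (σ (p + ε • a + s • d) - c) (fderiv ℝ σ (p + ε • a + s • d) d)) +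
        (B c (σ (p + ε • a + ε • d)) - B c (σ (p + ε • a))) := by
  rw [← integral_fderiv_comp_segment hC (B c), ← intervalIntegral.integral_add
    (intervalIntegrable_bilinear_comp_segment hC B c)
    (continuousOn_const.clm_apply ((continuousOn_comp_segment_of_contDiffAt hC).2.clm_apply
      continuousOn_const)).intervalIntegrable]
  refine intervalIntegral.integral_congr fun s _ => ?_
  simp only [map_sub, _root_.sub_apply, sub_add_cancel]

theorem isLittleO_sideIntegral {σ : E → F} {p : E} [CompleteSpace G]
    (hσ : ContDiffAt ℝ 1 σ p) (B : F →L[ℝ] F →L[ℝ] G) (a d : E) :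
    (fun ε : ℝ => sideIntegral B σ p a d ε -
        (B (σ p) (σ (p + ε • a + ε • d)) - B (σ p) (σ (p + ε • a))) -
        ε ^ 2 • (B (fderiv ℝ σ p a) (fderiv ℝ σ p d) +
          (1 / 2 : ℝ) • B (fderiv ℝ σ p d) (fderiv ℝ σ p d)))
      =o[𝓝 0] fun ε => ε ^ 2 := by
  set D := fderiv ℝ σ p
  refine isLittleO_iff.2 fun c hc => ?_
  set K := ‖a‖ + ‖d‖ + 1
  have hK : 0 < K := by positivity
  filter_upwards [eventually_forall_uIcc_segment (hσ.eventually (by simp)) a d,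
    eventually_forall_uIcc_segment ((isLittleO_bilinear_remainder hσ B d).def (div_pos hc hK)) a d]
    with ε hC hR
  rw [sideIntegral_eq_integral_sub_add hC (σ p), add_sub_cancel_right,
    ← integral_bilinear_comp_segment B D a d ε, ← intervalIntegral.integral_sub]
  · have hγ : ∀ s : ℝ, p + ε • a + s • d - p = ε • a + s • d := fun s => by abel
    calc _ ≤ c / K * (|ε| * (‖a‖ + ‖d‖)) * |ε - 0| :=
          intervalIntegral.norm_integral_le_of_norm_le_const fun s hs => by
            have hs' := Set.uIoc_subset_uIcc hs
            have := hR s hs'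
            rw [hγ] at this
            exact this.trans (mul_le_mul_of_nonneg_left
              (norm_smul_add_smul_le_of_mem_uIcc hs' a d) (by positivity))
      _ = c * ‖ε ^ 2‖ * ((‖a‖ + ‖d‖) / K) := by
          rw [sub_zero, norm_pow, Real.norm_eq_abs]
          field_simp
      _ ≤ c * ‖ε ^ 2‖ :=
          mul_le_of_le_one_right (by positivity) ((div_le_one hK).2 (by linarith))
  · exact intervalIntegrable_bilinear_comp_segment hC B (σ p)
  · exact (by fun_prop : Continuous fun s : ℝ => B (D (ε • a + s • d)) (D d)).intervalIntegrable
      _ _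

theorem isLittleO_boundaryBivector [CompleteSpace G] {σ : E → F} {p : E}
    (hσ : ContDiffAt ℝ 1 σ p) (B : F →L[ℝ] F →L[ℝ] G) (d₁ d₂ : E) :
    (fun ε : ℝ => boundaryBivector B σ p d₁ d₂ ε - ε ^ 2 • (1 / 2 : ℝ) •
      (B (fderiv ℝ σ p d₁) (fderiv ℝ σ p d₂) - B (fderiv ℝ σ p d₂) (fderiv ℝ σ p d₁)))
      =o[𝓝 0] fun ε => ε ^ 2 := by
  have h := (((isLittleO_sideIntegral hσ B 0 d₁).add (isLittleO_sideIntegral hσ B d₁ d₂)).sub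
    (isLittleO_sideIntegral hσ B d₂ d₁)).sub (isLittleO_sideIntegral hσ B 0 d₂)
  refine (h.const_smul_left (1 / 2 : ℝ)).congr_left fun ε => ?_
  simp only [boundaryBivector, Pi.smul_apply, smul_zero, add_zero, zero_add, map_zero,
    _root_.zero_apply, add_right_comm p (ε • d₂) (ε • d₁)]
  module

theorem tendsto_inv_sq_smul_boundaryBivector [CompleteSpace G] {σ : E → F} {p : E}
    (hσ : ContDiffAt ℝ 1 σ p) (B : F →L[ℝ] F →L[ℝ] G) (d₁ d₂ : E) :
    Tendsto (fun ε : ℝ => (ε ^ 2)⁻¹ • boundaryBivector B σ p d₁ d₂ ε) (𝓝[≠] 0)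
      (𝓝 ((1 / 2 : ℝ) •
        (B (fderiv ℝ σ p d₁) (fderiv ℝ σ p d₂) - B (fderiv ℝ σ p d₂) (fderiv ℝ σ p d₁)))) := by
  have h := ((isLittleO_boundaryBivector hσ B d₁ d₂).mono
    (nhdsWithin_le_nhds (s := {0}ᶜ))).tendsto_inv_smul_nhds_zero
  refine tendsto_sub_nhds_zero_iff.1 <|
    h.congr' (eventually_nhdsWithin_of_forall fun ε (hε : ε ≠ 0) => ?_)
  rw [smul_sub, smul_smul, inv_mul_cancel₀ (pow_ne_zero 2 hε), one_smul]

end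

noncomputable def crossCLM :
    EuclideanSpace ℝ (Fin 3) →L[ℝ] EuclideanSpace ℝ (Fin 3) →L[ℝ] EuclideanSpace ℝ (Fin 3) :=
  let e := WithLp.linearEquiv 2 ℝ (Fin 3 → ℝ)
  LinearMap.toContinuousLinearMap (LinearMap.toContinuousLinearMap.toLinearMap ∘ₗ
    (crossProduct.compl₁₂ e.toLinearMap e.toLinearMap).compr₂ e.symm.toLinearMap)

theorem crossCLM_apply (u v : EuclideanSpace ℝ (Fin 3)) : crossCLM u v = cross3 u v := rfl

theorem half_smul_cross3_sub_cross3 (u v : EuclideanSpace ℝ (Fin 3)) :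
    (1 / 2 : ℝ) • (cross3 u v - cross3 v u) = cross3 u v := by
  have : cross3 v u = -cross3 u v := by
    simp only [cross3]
    rw [← cross_anticomm]
    rfl
  rw [this, sub_neg_eq_add, ← two_smul ℝ, smul_smul, one_div_mul_cancel two_ne_zero, one_smul]

/-- Peano: the ratio between the magnitude of the bi-vector of an infinitesimal
piece of a C¹ surface and the area of that piece tends to 1.  Quantitatively:
if `b(ε)` is the bi-vector of the image under `σ` of the counterclockwise
boundary of the square `[x, x+ε] × [y, y+ε]`, then
`‖b(ε)‖/ε² → ‖∂₁σ(x,y) ×ᵥ ∂₂σ(x,y)‖` as `ε → 0⁺`. -/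
theorem peano_infinitesimal_bivector_area
    (U : Set (ℝ × ℝ)) (hU : IsOpen U)
    (σ : ℝ × ℝ → EuclideanSpace ℝ (Fin 3)) (hσ : ContDiffOn ℝ 1 σ U)
    (x y : ℝ) (hxy : (x, y) ∈ U) :
    Tendsto (fun ε : ℝ =>
        ‖(1 / 2 : ℝ) •
          ((∫ s in (0:ℝ)..ε, cross3 (σ (x + s, y)) (fderiv ℝ σ (x + s, y) (1, 0))) +
            (∫ s in (0:ℝ)..ε, cross3 (σ (x + ε, y + s)) (fderiv ℝ σ (x + ε, y + s) (0, 1))) -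
            (∫ s in (0:ℝ)..ε, cross3 (σ (x + s, y + ε)) (fderiv ℝ σ (x + s, y + ε) (1, 0))) -
            (∫ s in (0:ℝ)..ε, cross3 (σ (x, y + s)) (fderiv ℝ σ (x, y + s) (0, 1))))‖ / ε ^ 2)
      (nhdsWithin 0 (Set.Ioi 0))
      (nhds ‖cross3 (fderiv ℝ σ (x, y) (1, 0)) (fderiv ℝ σ (x, y) (0, 1))‖) := by
  have h := ((tendsto_inv_sq_smul_boundaryBivector (hσ.contDiffAt (hU.mem_nhds hxy)) crossCLM
    (1, 0) (0, 1)).mono_left (nhdsWithin_mono _ fun ε (hε : ε ∈ Set.Ioi 0) => ne_of_gt hε)).norm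
  rw [crossCLM_apply, crossCLM_apply, half_smul_cross3_sub_cross3] at h
  refine h.congr' (eventually_nhdsWithin_of_forall fun ε (hε : 0 < ε) => ?_)
  rw [norm_smul, norm_inv, norm_pow, Real.norm_eq_abs, abs_of_pos hε, inv_mul_eq_div]
  simp [boundaryBivector, sideIntegral, crossCLM_apply]
end

section
/- Let m, n be positive integers and consider the Schwarz–Peano polyhedral surface 𝒮_{m,n} inscribed in the cylinder of height 1 and radius 1, consisting of the mn triangles with vertices (cos(2πr/m), sin(2πr/m), s/n), (cos(2π(r+1)/m), sin(2π(r+1)/m), s/n), (cos(π(2r+1)/m), sin(π(2r+1)/m), (s+1)/n) and the mn triangles with vertices (cos(2πr/m), sin(2πr/m), s/n), (cos(π(2r−1)/m), sin(π(2r−1)/m), (s+1)/n), (cos(π(2r+1)/m), sin(π(2r+1)/m), (s+1)/n), for r = 0, …, m−1 and s = 0, …, n−1. Then the total area of 𝒮_{m,n}, i.e., the sum over all these 2mn triangles of (1/2)‖(V₂ − V₁) ×ᵥ (V₃ − V₁)‖ where V₁, V₂, V₃ are the vertices of each triangle, equals a_{m,n} = 2m sin(π/m) √(1 + 4n² sin⁴(π/(2m))).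 -/
/-!
Each triangle of `𝒮_{m,n}` is isosceles: its base is a horizontal chord of length `2 sin(π/m)`,
and its apex sits at vertical distance `1/n` and horizontal distance `1 - cos(π/m)` from the
midpoint of that chord. By Lagrange's identity `‖u ×ᵥ v‖² = ‖u‖²‖v‖² - ⟪u, v⟫²` the area is
computed from inner products of differences of points of the cylinder, which depend only on
differences of angles; so all `2mn` triangles have area `sin(π/m) √(1/n² + (1 - cos(π/m))²)`.
-/

open Matrix Real

/-- The point `(cos θ, sin θ, z)` of the cylinder of radius 1. -/
noncomputable def cyl (θ z : ℝ) : EuclideanSpace ℝ (Fin 3) :=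
  (WithLp.equiv 2 (Fin 3 → ℝ)).symm ![Real.cos θ, Real.sin θ, z]

/-- Area of the triangle of ℝ³ with vertices `V₁`, `V₂`, `V₃`. -/
noncomputable def triArea (V₁ V₂ V₃ : EuclideanSpace ℝ (Fin 3)) : ℝ :=
  (1 / 2) * ‖cross3 (V₂ - V₁) (V₃ - V₁)‖

theorem EuclideanSpace.real_inner_eq_dotProduct {ι : Type*} [Fintype ι]
    (x y : EuclideanSpace ℝ ι) : inner ℝ x y = x.ofLp ⬝ᵥ y.ofLp := by
  simp [EuclideanSpace.inner_eq_star_dotProduct, dotProduct_comm]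

theorem norm_cross3_sq (u v : EuclideanSpace ℝ (Fin 3)) :
    ‖cross3 u v‖ ^ 2 = ‖u‖ ^ 2 * ‖v‖ ^ 2 - inner ℝ u v ^ 2 := by
  simp only [← real_inner_self_eq_norm_sq, EuclideanSpace.real_inner_eq_dotProduct, cross3]
  simp [cross_dot_cross, sq, dotProduct_comm v.ofLp]

theorem triArea_eq_of_gram {V₁ V₂ V₃ : EuclideanSpace ℝ (Fin 3)} {s X : ℝ}
    (h : ‖V₂ - V₁‖ ^ 2 * ‖V₃ - V₁‖ ^ 2 - inner ℝ (V₂ - V₁) (V₃ - V₁) ^ 2 = (2 * s) ^ 2 * X) :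
    triArea V₁ V₂ V₃ = |s| * √X := by
  rw [triArea, ← sqrt_sq (norm_nonneg _), norm_cross3_sq, h, sqrt_mul (sq_nonneg _),
    sqrt_sq_eq_abs, abs_mul, abs_two]
  ring

theorem inner_cyl_sub_cyl (α β γ z w₁ w₂ : ℝ) :
    inner ℝ (cyl β w₁ - cyl α z) (cyl γ w₂ - cyl α z) =
      1 - cos (β - α) - cos (γ - α) + cos (β - γ) + (w₁ - z) * (w₂ - z) := by
  simp only [cyl, WithLp.equiv_symm_apply, EuclideanSpace.real_inner_eq_dotProduct,
    WithLp.ofLp_sub, sub_cons, head_cons, tail_cons, sub_self, zero_empty, dotProduct_cons,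
    dotProduct_of_isEmpty, add_zero, cos_sub]
  linear_combination sin_sq_add_cos_sq α

theorem norm_cyl_sub_cyl_sq (α β z w : ℝ) :
    ‖cyl β w - cyl α z‖ ^ 2 = 2 - 2 * cos (β - α) + (w - z) ^ 2 := by
  rw [← real_inner_self_eq_norm_sq, inner_cyl_sub_cyl, sub_self, cos_zero]
  ring

theorem triArea_cyl_chord_below (α h z d : ℝ) :
    triArea (cyl α z) (cyl (α + 2 * h) z) (cyl (α + h) (z + d)) =
      |sin h| * √(d ^ 2 + (1 - cos h) ^ 2) := by
  apply triArea_eq_of_gram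
  simp only [norm_cyl_sub_cyl_sq, inner_cyl_sub_cyl, add_sub_cancel_left,
    show α + 2 * h - (α + h) = h by ring, cos_two_mul, sub_self]
  linear_combination (-4 * (d ^ 2 + (1 - cos h) ^ 2)) * sin_sq_add_cos_sq h

theorem triArea_cyl_chord_above (α h z d : ℝ) :
    triArea (cyl α z) (cyl (α - h) (z + d)) (cyl (α + h) (z + d)) =
      |sin h| * √(d ^ 2 + (1 - cos h) ^ 2) := by
  apply triArea_eq_of_gram
  simp only [norm_cyl_sub_cyl_sq, inner_cyl_sub_cyl, add_sub_cancel_left, sub_sub_cancel_left,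
    show α - h - (α + h) = -(2 * h) by ring, cos_neg, cos_two_mul]
  linear_combination (-4 * (d ^ 2 + (1 - cos h) ^ 2)) * sin_sq_add_cos_sq h

theorem one_sub_cos_eq_two_mul_sin_half_sq (x : ℝ) : 1 - cos x = 2 * sin (x / 2) ^ 2 := by
  rw [sin_sq_eq_half_sub, mul_div_cancel₀ x two_ne_zero]
  ring

theorem schwarz_peano_polyhedral_area_general (m n : ℕ) (hn : 0 < n) :
    ∑ r ∈ Finset.range m, ∑ s ∈ Finset.range n,
        (triArea (cyl (2 * π * r / m) (s / n))
            (cyl (2 * π * (r + 1) / m) (s / n))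
            (cyl (π * (2 * r + 1) / m) ((s + 1) / n)) +
          triArea (cyl (2 * π * r / m) (s / n))
            (cyl (π * (2 * r - 1) / m) ((s + 1) / n))
            (cyl (π * (2 * r + 1) / m) ((s + 1) / n))) =
      2 * m * Real.sin (π / m) *
        Real.sqrt (1 + 4 * n ^ 2 * Real.sin (π / (2 * m)) ^ 4) := by
  have hsin : 0 ≤ sin (π / m) :=
    sin_nonneg_of_nonneg_of_le_pi (by positivity) (div_nat_le_self_of_nonnneg pi_pos.le m)
  have hpair : ∀ r s : ℕ,
      triArea (cyl (2 * π * r / m) (s / n))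
            (cyl (2 * π * (r + 1) / m) (s / n))
            (cyl (π * (2 * r + 1) / m) ((s + 1) / n)) +
          triArea (cyl (2 * π * r / m) (s / n))
            (cyl (π * (2 * r - 1) / m) ((s + 1) / n))
            (cyl (π * (2 * r + 1) / m) ((s + 1) / n)) =
        2 * sin (π / m) * √((1 / n) ^ 2 + (1 - cos (π / m)) ^ 2) := by
    intro r s
    rw [show 2 * π * (r + 1) / m = 2 * π * r / m + 2 * (π / m) by ring,
      show π * (2 * r + 1) / m = 2 * π * r / m + π / m by ring,
      show π * (2 * r - 1) / m = 2 * π * r / m - π / m by ring,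
      show ((s : ℝ) + 1) / n = s / n + 1 / n by ring,
      triArea_cyl_chord_below, triArea_cyl_chord_above, abs_of_nonneg hsin]
    ring
  have hscale : √(1 + 4 * n ^ 2 * sin (π / (2 * m)) ^ 4) =
      n * √((1 / n) ^ 2 + (1 - cos (π / m)) ^ 2) := by
    have hn' : (n : ℝ) ≠ 0 := by positivity
    rw [one_sub_cos_eq_two_mul_sin_half_sq, div_div,
      show 1 + 4 * (n : ℝ) ^ 2 * sin (π / (2 * m)) ^ 4 =
        n ^ 2 * ((1 / n) ^ 2 + (2 * sin (π / (m * 2)) ^ 2) ^ 2) by field_simp; ring,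
      sqrt_mul (sq_nonneg _), sqrt_sq (Nat.cast_nonneg n)]
  simp only [hpair, Finset.sum_const, Finset.card_range, nsmul_eq_mul, hscale]
  ring

/-- The total area of the Schwarz–Peano polyhedral surface `𝒮_{m,n}` inscribed in
the cylinder of height 1 and radius 1 equals
`a_{m,n} = 2m sin(π/m) √(1 + 4n² sin⁴(π/(2m)))`. -/
theorem schwarz_peano_polyhedral_area (m n : ℕ) (hm : 0 < m) (hn : 0 < n) :
    ∑ r ∈ Finset.range m, ∑ s ∈ Finset.range n,
        (triArea (cyl (2 * π * r / m) (s / n))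
            (cyl (2 * π * (r + 1) / m) (s / n))
            (cyl (π * (2 * r + 1) / m) ((s + 1) / n)) +
          triArea (cyl (2 * π * r / m) (s / n))
            (cyl (π * (2 * r - 1) / m) ((s + 1) / n))
            (cyl (π * (2 * r + 1) / m) ((s + 1) / n))) =
      2 * m * Real.sin (π / m) *
        Real.sqrt (1 + 4 * n ^ 2 * Real.sin (π / (2 * m)) ^ 4) :=
  schwarz_peano_polyhedral_area_general m n hn
end
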